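/- arXiv:1402.5819 — 7 statements merged into one kernel-verified Lean document; each statement's English description precedes it below -/
import Mathlib

section
/- Let X_1, X_2, ... be i.i.d. random variables with values in {1,2,3,...}, and construct a chain C of cycles C_1, C_2, ... where C_i has length X_i + 1 and the root x_{i+1} of C_{i+1} is attached at a uniformly chosen point of C_i \ {x_i}. Let A_n be the set of vertices of C within graph distance n of the root x_1. Then E(|A_n|) ≤ 16n + 1 for all n ≥ 0. -/
/-!
Let `D_i` be the distance from the root to `x_i` and `Y_i = min (U_i, X_i + 1 - U_i)` the distance
from `x_i` to `x_{i+1}`, so `D_i = Y_1 + ⋯ + Y_{i-1}`. At most `min (X_i, 2n)` vertices of `C_i`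
lie in `A_n`, and none unless `D_i ≤ n`. Since `D_i` is independent of `(X_i, U_i)` and
`E min (X_i, 2n) ≤ 8 E min (Y_i, n)` by uniformity of `U_i`, the expected number of non-root
vertices in `A_n` is at most `8 E ∑_i 1{D_i ≤ n} min (Y_i, n)`. That sum is at most `2n`: the
indices with `D_i ≤ n` form an initial segment, and over it the terms add up to at most
`D_i + n` for its last index `i`.
-/

open MeasureTheory ProbabilityTheory
open scoped ENNReal

/-- Distance from the root of the chain of cycles to the root `x_{i+1}` of the `(i+1)`-st
cycle: cycle `C_i` has `X i + 1` vertices, and `x_{i+1}` sits at position `U i ∈ {1,...,X i}`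
on `C_i`, at distance `min (U i) (X i + 1 - U i)` from `x_i`. -/
def chainD (X U : ℕ → ℕ) : ℕ → ℕ
  | 0 => 0
  | i + 1 => chainD X U i + min (U i) (X i + 1 - U i)

-- The graph distance between the vertices `0` and `u` of a cycle with `m + 1` vertices.
def cycleDist (m u : ℕ) : ℕ := min u (m + 1 - u)

lemma chainD_eq_sum_cycleDist (X U : ℕ → ℕ) (i : ℕ) :
    chainD X U i = ∑ k ∈ Finset.range i, cycleDist (X k) (U k) := by
  induction i with
  | zero => rfl
  | succ i ih => rw [Finset.sum_range_succ, ← ih]; rfl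

lemma card_filter_cycleDist_le (m r : ℕ) :
    ((Finset.Icc 1 m).filter (fun j => cycleDist m j ≤ r)).card ≤ min m (2 * r) := by
  refine le_min ((Finset.card_filter_le _ _).trans (by simp)) ?_
  calc _ ≤ (Finset.Icc 1 r ∪ Finset.Icc (m + 1 - r) m).card := by
        refine Finset.card_le_card fun j hj => ?_
        obtain ⟨hjm, hjr⟩ := Finset.mem_filter.1 hj
        rw [Finset.mem_Icc] at hjm
        rw [Finset.mem_union, Finset.mem_Icc, Finset.mem_Icc]
        unfold cycleDist at hjr
        omega
    _ ≤ 2 * r := (Finset.card_union_le _ _).trans (by simp only [Nat.card_Icc]; omega)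

lemma tsum_ite_cycleDist_le (D m n : ℕ) :
    ∑' j : ℕ, (if 1 ≤ j ∧ j ≤ m ∧ D + cycleDist m j ≤ n then 1 else 0 : ℝ≥0∞)
      ≤ if D ≤ n then (min m (2 * n) : ℕ) else 0 := by
  split_ifs with hD
  · rw [tsum_eq_sum (s := (Finset.Icc 1 m).filter (fun j => cycleDist m j ≤ n - D))
      (fun j hj => if_neg (by simp only [Finset.mem_filter, Finset.mem_Icc] at hj; omega))]
    calc _ ≤ (((Finset.Icc 1 m).filter (fun j => cycleDist m j ≤ n - D)).card : ℝ≥0∞) := by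
          rw [Finset.card_eq_sum_ones, Nat.cast_sum]
          exact Finset.sum_le_sum fun j _ => by split_ifs <;> simp
      _ ≤ _ := by
          exact_mod_cast (card_filter_cycleDist_le m (n - D)).trans (by omega)
  · rw [Nat.cast_zero, nonpos_iff_eq_zero, ENNReal.tsum_eq_zero]
    intro j
    rw [if_neg (by omega)]

lemma sum_range_ite_partialSum_mul_min_le (x : ℕ → ℕ) (n N : ℕ) :
    ∑ i ∈ Finset.range N, (if ∑ k ∈ Finset.range i, x k ≤ n then min (x i) n else 0)
      ≤ min (∑ k ∈ Finset.range N, x k) (2 * n) := by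
  induction N with
  | zero => simp
  | succ N ih =>
    rw [Finset.sum_range_succ, Finset.sum_range_succ]
    split_ifs <;> omega

lemma tsum_ite_partialSum_mul_min_le (x : ℕ → ℕ) (n : ℕ) :
    ∑' i, (if ∑ k ∈ Finset.range i, x k ≤ n then 1 else 0 : ℝ≥0∞) * (min (x i) n : ℕ)
      ≤ 2 * n :=
  ENNReal.tsum_le_of_sum_range_le fun N => by
    calc _ = ((∑ i ∈ Finset.range N,
            (if ∑ k ∈ Finset.range i, x k ≤ n then min (x i) n else 0) : ℕ) : ℝ≥0∞) := by
          push_cast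
          exact Finset.sum_congr rfl fun i _ => by split_ifs <;> simp
      _ ≤ _ := by
          exact_mod_cast (sum_range_ite_partialSum_mul_min_le x n N).trans (min_le_right _ _)

lemma mul_le_sum_Icc_min_cycleDist (m n t : ℕ) (ht : 1 ≤ t) (htn : t ≤ n) :
    (m + 2 - 2 * t) * t ≤ ∑ u ∈ Finset.Icc 1 m, min (cycleDist m u) n :=
  calc (m + 2 - 2 * t) * t = ∑ _u ∈ Finset.Icc t (m + 1 - t), t := by
        rw [Finset.sum_const, Nat.card_Icc, smul_eq_mul]
        congr 1
        omega
    _ ≤ ∑ u ∈ Finset.Icc t (m + 1 - t), min (cycleDist m u) n :=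
        Finset.sum_le_sum fun u hu => by
          rw [Finset.mem_Icc] at hu
          simp only [cycleDist, le_min_iff]
          omega
    _ ≤ ∑ u ∈ Finset.Icc 1 m, min (cycleDist m u) n :=
        Finset.sum_le_sum_of_subset fun u hu => by
          rw [Finset.mem_Icc] at hu ⊢
          omega

lemma mul_min_le_eight_mul_sum_min_cycleDist (m n : ℕ) :
    m * min m (2 * n) ≤ 8 * ∑ u ∈ Finset.Icc 1 m, min (cycleDist m u) n := by
  rcases Nat.eq_zero_or_pos m with rfl | hm
  · simp
  rcases Nat.eq_zero_or_pos n with rfl | hn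
  · simp
  set t := min n ((m + 3) / 4)
  refine le_trans ?_ (Nat.mul_le_mul_left 8
    (mul_le_sum_Icc_min_cycleDist m n t (by omega) (min_le_left _ _)))
  obtain ⟨a, ha, hat⟩ : ∃ a, m + 2 - 2 * t = a ∧ a + 2 * t = m + 2 := ⟨_, rfl, by omega⟩
  rw [ha]
  rcases min_cases n ((m + 3) / 4) with ⟨htn, -⟩ | ⟨htq, hnq⟩
  · have htn : t = n := htn
    have h4a : m ≤ 4 * a := by omega
    rcases min_cases m (2 * n) with ⟨he, hm2n⟩ | ⟨he, -⟩ <;> rw [he] <;> nlinarith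
  · have h4t : m ≤ 4 * t := by omega
    have h2a : m + 1 ≤ 2 * a := by omega
    rcases min_cases m (2 * n) with ⟨he, -⟩ | ⟨he, h2nm⟩ <;> rw [he] <;> nlinarith

section Probability

variable {Ω : Type*} {mΩ : MeasurableSpace Ω} {μ : Measure Ω}

lemma ProbabilityTheory.iIndepFun.lintegral_mul_partialSum {β : Type*} [MeasurableSpace β]
    {V : ℕ → Ω → β} (hindep : iIndepFun V μ) (hV : ∀ i, Measurable (V i)) {ψ : β → ℕ}
    (hψ : Measurable ψ) (f : ℕ → ℝ≥0∞) {g : β → ℝ≥0∞} (hg : Measurable g) (i : ℕ) :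
    ∫⁻ ω, f (∑ k ∈ Finset.range i, ψ (V k ω)) * g (V i ω) ∂μ
      = (∫⁻ ω, f (∑ k ∈ Finset.range i, ψ (V k ω)) ∂μ) * ∫⁻ ω, g (V i ω) ∂μ := by
  have hF : Measurable fun v : Finset.range i → β => f (∑ k, ψ (v k)) :=
    measurable_from_nat.comp (Finset.measurable_sum _ fun k _ => hψ.comp (measurable_pi_apply k))
  have hG : Measurable fun v : ({i} : Finset ℕ) → β => g (v ⟨i, Finset.mem_singleton_self i⟩) :=
    hg.comp (measurable_pi_apply _)
  have hprefix := (hindep.indepFun_finset (Finset.range i) {i} (by simp) hV).comp hF hG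
  simp only [Function.comp_def] at hprefix
  have hsum : (fun ω => f (∑ k : Finset.range i, ψ (V k ω)))
      = fun ω => f (∑ k ∈ Finset.range i, ψ (V k ω)) :=
    funext fun ω => congrArg f (Finset.sum_coe_sort (Finset.range i) fun k => ψ (V k ω))
  rw [hsum] at hprefix
  exact lintegral_mul_eq_lintegral_mul_lintegral_of_indepFun
    (measurable_from_nat.comp (Finset.measurable_sum _ fun k _ => hψ.comp (hV k)))
    (hg.comp (hV i)) hprefix

lemma lintegral_comp_eq_tsum_sum_Icc {V : Ω → ℕ × ℕ} (hV : Measurable V)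
    (hsupp : ∀ ω, 1 ≤ (V ω).2 ∧ (V ω).2 ≤ (V ω).1)
    (hunif : ∀ m u, 1 ≤ u → u ≤ m → μ (V ⁻¹' {(m, u)}) = μ (V ⁻¹' {(m, 1)}))
    (f : ℕ × ℕ → ℝ≥0∞) :
    ∫⁻ ω, f (V ω) ∂μ = ∑' m, (∑ u ∈ Finset.Icc 1 m, f (m, u)) * μ (V ⁻¹' {(m, 1)}) := by
  rw [← lintegral_map (measurable_of_countable f) hV, lintegral_countable', ENNReal.tsum_prod']
  refine tsum_congr fun m => ?_
  simp only [Measure.map_apply hV (measurableSet_singleton _)]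
  rw [tsum_eq_sum (s := Finset.Icc 1 m), Finset.sum_mul]
  · exact Finset.sum_congr rfl fun u hu => by
      rw [Finset.mem_Icc] at hu
      rw [hunif m u hu.1 hu.2]
  · intro u hu
    rw [Finset.mem_Icc] at hu
    have hempty : V ⁻¹' {(m, u)} = ∅ := Set.eq_empty_of_forall_notMem fun ω hω => by
      have := hsupp ω
      rw [Set.mem_singleton_iff.1 hω] at this
      exact hu this
    rw [hempty, measure_empty, mul_zero]

lemma lintegral_comp_le_of_uniform {V : Ω → ℕ × ℕ} (hV : Measurable V)
    (hsupp : ∀ ω, 1 ≤ (V ω).2 ∧ (V ω).2 ≤ (V ω).1)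
    (hunif : ∀ m u, 1 ≤ u → u ≤ m → μ (V ⁻¹' {(m, u)}) = μ (V ⁻¹' {(m, 1)}))
    {f g : ℕ × ℕ → ℝ≥0∞} {C : ℝ≥0∞}
    (hfg : ∀ m, ∑ u ∈ Finset.Icc 1 m, f (m, u) ≤ C * ∑ u ∈ Finset.Icc 1 m, g (m, u)) :
    ∫⁻ ω, f (V ω) ∂μ ≤ C * ∫⁻ ω, g (V ω) ∂μ := by
  rw [lintegral_comp_eq_tsum_sum_Icc hV hsupp hunif, lintegral_comp_eq_tsum_sum_Icc hV hsupp hunif,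
    ← ENNReal.tsum_mul_left]
  exact ENNReal.tsum_le_tsum fun m => by
    rw [← mul_assoc]
    exact mul_le_mul_left (hfg m) _

lemma tsum_measure_cycleDist_le_lintegral {X D : Ω → ℕ} (hX : Measurable X) (hD : Measurable D)
    (n : ℕ) :
    ∑' j, μ {ω | 1 ≤ j ∧ j ≤ X ω ∧ D ω + cycleDist (X ω) j ≤ n}
      ≤ ∫⁻ ω, (if D ω ≤ n then 1 else 0) * (min (X ω) (2 * n) : ℕ) ∂μ := by
  have hmeas : ∀ j, MeasurableSet {ω | 1 ≤ j ∧ j ≤ X ω ∧ D ω + cycleDist (X ω) j ≤ n} :=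
    fun j => (hX.prodMk hD) (MeasurableSet.of_discrete
      (s := {p : ℕ × ℕ | 1 ≤ j ∧ j ≤ p.1 ∧ p.2 + cycleDist p.1 j ≤ n}))
  simp_rw [← lintegral_indicator_one (hmeas _)]
  rw [← lintegral_tsum fun j => (measurable_one.indicator (hmeas j)).aemeasurable]
  refine lintegral_mono fun ω => ?_
  simp only [Set.indicator_apply, Set.mem_ofPred_eq, Pi.one_apply]
  refine (tsum_ite_cycleDist_le (D ω) (X ω) n).trans ?_
  split_ifs <;> simp

theorem tsum_tsum_measure_chain_le [IsProbabilityMeasure μ] {V : ℕ → Ω → ℕ × ℕ}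
    (hV : ∀ i, Measurable (V i)) (hindep : iIndepFun V μ)
    (hsupp : ∀ i ω, 1 ≤ (V i ω).2 ∧ (V i ω).2 ≤ (V i ω).1)
    (hunif : ∀ i m u, 1 ≤ u → u ≤ m → μ (V i ⁻¹' {(m, u)}) = μ (V i ⁻¹' {(m, 1)})) (n : ℕ) :
    ∑' (i : ℕ) (j : ℕ), μ {ω | 1 ≤ j ∧ j ≤ (V i ω).1 ∧
        chainD (fun k => (V k ω).1) (fun k => (V k ω).2) i + cycleDist (V i ω).1 j ≤ n}
      ≤ 16 * n := by
  set ψ : ℕ × ℕ → ℕ := fun p => cycleDist p.1 p.2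
  set ind : ℕ → ℝ≥0∞ := fun d => if d ≤ n then 1 else 0
  have hψ : Measurable ψ := measurable_of_countable ψ
  have hD : ∀ i, Measurable fun ω => ∑ k ∈ Finset.range i, ψ (V k ω) := fun i =>
    Finset.measurable_sum _ fun k _ => hψ.comp (hV k)
  have hstep : ∀ i,
      ∫⁻ ω, ind (∑ k ∈ Finset.range i, ψ (V k ω)) * (min (V i ω).1 (2 * n) : ℕ) ∂μ
        ≤ 8 * ∫⁻ ω, ind (∑ k ∈ Finset.range i, ψ (V k ω)) * (min (ψ (V i ω)) n : ℕ) ∂μ := by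
    intro i
    rw [hindep.lintegral_mul_partialSum hV hψ ind
        (measurable_of_countable fun p => ((min p.1 (2 * n) : ℕ) : ℝ≥0∞)) i,
      hindep.lintegral_mul_partialSum hV hψ ind
        (measurable_of_countable fun p => ((min (ψ p) n : ℕ) : ℝ≥0∞)) i, mul_left_comm]
    gcongr
    refine lintegral_comp_le_of_uniform (hV i) (hsupp i) (hunif i)
      (f := fun p => ((min p.1 (2 * n) : ℕ) : ℝ≥0∞)) (g := fun p => ((min (ψ p) n : ℕ) : ℝ≥0∞))
      fun m => ?_
    simp only [Finset.sum_const, Nat.card_Icc, add_tsub_cancel_right, nsmul_eq_mul]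
    exact_mod_cast mul_min_le_eight_mul_sum_min_cycleDist m n
  calc _ ≤ ∑' i, ∫⁻ ω, ind (∑ k ∈ Finset.range i, ψ (V k ω)) * (min (V i ω).1 (2 * n) : ℕ) ∂μ :=
        ENNReal.tsum_le_tsum fun i => by
          simpa only [chainD_eq_sum_cycleDist] using
            tsum_measure_cycleDist_le_lintegral (hV i).fst (hD i) n
    _ ≤ ∑' i, 8 * ∫⁻ ω, ind (∑ k ∈ Finset.range i, ψ (V k ω)) * (min (ψ (V i ω)) n : ℕ) ∂μ :=
        ENNReal.tsum_le_tsum hstep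
    _ = 8 * ∫⁻ ω, ∑' i, ind (∑ k ∈ Finset.range i, ψ (V k ω)) * (min (ψ (V i ω)) n : ℕ) ∂μ := by
        rw [ENNReal.tsum_mul_left, lintegral_tsum fun i => ?_]
        exact ((measurable_from_nat (f := ind)).comp (hD i)).mul
          ((measurable_of_countable fun p => ((min (ψ p) n : ℕ) : ℝ≥0∞)).comp (hV i))
          |>.aemeasurable
    _ ≤ 8 * ∫⁻ _, 2 * n ∂μ := by
        gcongr with ω
        exact tsum_ite_partialSum_mul_min_le (fun k => ψ (V k ω)) n
    _ = 16 * n := by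
        rw [lintegral_const, measure_univ, mul_one, ← mul_assoc]
        norm_num

end Probability

/-- The non-root vertices of `C_i` are encoded as the pairs `(i, j)` with `1 ≤ j ≤ X_i`, the
vertex `(i, j)` lying at distance `chainD X U i + min j (X_i + 1 - j)` from the root; the
`1` on the left counts the root. -/
theorem stmt3_general {Ω : Type*} [MeasureSpace Ω] [IsProbabilityMeasure (ℙ : Measure Ω)]
    (X U : ℕ → Ω → ℕ) (hXmeas : ∀ i, Measurable (X i)) (hUmeas : ∀ i, Measurable (U i))
    (hUrange : ∀ i ω, 1 ≤ U i ω ∧ U i ω ≤ X i ω)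
    (hindep : iIndepFun (fun i ω => (X i ω, U i ω)) ℙ)
    (hUunif : ∀ i k j : ℕ, 1 ≤ j → j ≤ k →
      (ℙ {ω | X i ω = k ∧ U i ω = j}).toReal = (ℙ {ω | X i ω = k}).toReal / k) :
    ∀ n : ℕ,
      1 + ∑' (i : ℕ) (j : ℕ),
          ℙ {ω | 1 ≤ j ∧ j ≤ X i ω ∧
            chainD (fun k => X k ω) (fun k => U k ω) i + min j (X i ω + 1 - j) ≤ n}
        ≤ ((16 * n + 1 : ℕ) : ENNReal) := by
  intro n
  have hpreimage : ∀ i m u, (fun ω => (X i ω, U i ω)) ⁻¹' {(m, u)} = {ω | X i ω = m ∧ U i ω = u} :=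
    fun i m u => by ext; simp [Prod.ext_iff]
  have hunif : ∀ i m u, 1 ≤ u → u ≤ m → ℙ ((fun ω => (X i ω, U i ω)) ⁻¹' {(m, u)})
      = ℙ ((fun ω => (X i ω, U i ω)) ⁻¹' {(m, 1)}) := fun i m u hu hum => by
    rw [hpreimage, hpreimage, ← ENNReal.toReal_eq_toReal_iff' (measure_ne_top _ _)
      (measure_ne_top _ _), hUunif i m u hu hum, hUunif i m 1 le_rfl (hu.trans hum)]
  have hchain := tsum_tsum_measure_chain_le (fun i => (hXmeas i).prodMk (hUmeas i)) hindep
    hUrange hunif n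
  exact (add_le_add_right hchain 1).trans_eq (by push_cast; ring)

/-- The chain of cycles: `C_i` has length `X_i + 1` with i.i.d. `X_i ≥ 1`, and the root of
`C_{i+1}` is attached at a uniform point of `C_i \ {x_i}`.  The non-root vertices of
cycle `C_i` are the pairs `(i, j)` with `1 ≤ j ≤ X_i`, whose distance from the root `x_1`
is `chainD X U i + min j (X_i + 1 - j)`.  The expected number of vertices of the chain
within distance `n` of the root (`1` for the root plus one for each pair `(i,j)` within
distance `n`, expectations computed as the sum of the corresponding probabilities) is at
most `16 n + 1`. -/
theorem stmt3 {Ω : Type*} [MeasureSpace Ω] [IsProbabilityMeasure (ℙ : Measure Ω)]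
    (X U : ℕ → Ω → ℕ) (hXmeas : ∀ i, Measurable (X i)) (hUmeas : ∀ i, Measurable (U i))
    (hX1 : ∀ i ω, 1 ≤ X i ω)
    (hUrange : ∀ i ω, 1 ≤ U i ω ∧ U i ω ≤ X i ω)
    (hindep : iIndepFun (fun i ω => (X i ω, U i ω)) ℙ)
    (hident : ∀ i, Measure.map (fun ω => (X i ω, U i ω)) ℙ
      = Measure.map (fun ω => (X 0 ω, U 0 ω)) ℙ)
    (hUunif : ∀ i k j : ℕ, 1 ≤ j → j ≤ k →
      (ℙ {ω | X i ω = k ∧ U i ω = j}).toReal = (ℙ {ω | X i ω = k}).toReal / k) :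
    ∀ n : ℕ,
      1 + ∑' (i : ℕ) (j : ℕ),
          ℙ {ω | 1 ≤ j ∧ j ≤ X i ω ∧
            chainD (fun k => X k ω) (fun k => U k ω) i + min j (X i ω + 1 - j) ≤ n}
        ≤ ((16 * n + 1 : ℕ) : ENNReal) :=
  stmt3_general X U hXmeas hUmeas hUrange hindep hUunif
end

section
/- With the random chain of cycles as above, let R_n be the number of non-root (open) vertices of the chain at distance at most n from the root. Let Y_i = min{U_i(X_i), X_i − U_i(X_i) + 1} and p = P(Y_i > 1). Then R_n stochastically dominates a Binomial(⌊n/2⌋, p) random variable. -/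
/-!
Call cycle `i` a big step if its exit root `x_{i+1}` is at distance at least `2` from `x_i`. These
are independent events of probability `p`, so the number of big steps among the first `⌊n/2⌋`
cycles has law `Bin(⌊n/2⌋, p)`, and it suffices to show that this number is at most `R_n`.

Every distance `d ∈ [1, n]` at which no root sits is the distance of an open vertex, namely of
the vertex at distance `d` on the cycle whose two roots straddle `d`. If `x_{⌊n/2⌋+1}` is within
distance `n`, each big step `i ≤ ⌊n/2⌋` leaves such a gap at distance `d(x_i) + 1`; otherwise at
most `⌊n/2⌋ - 1` roots other than `x_1` lie within distance `n`, which leaves at least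
`n + 1 - ⌊n/2⌋ ≥ ⌊n/2⌋` gaps.
-/

open MeasureTheory ProbabilityTheory Filter Real

/-- The number of open (non-root) vertices of the chain of cycles within distance `n` of
the root: the open vertices of cycle `C_i` are the pairs `(i, j)` with `1 ≤ j ≤ X_i` and
`j ≠ U i` (position `U i` being the root `x_{i+1}`), at distance
`chainD X U i + min j (X_i + 1 - j)` from the root. -/
noncomputable def openCount (X U : ℕ → ℕ) (n : ℕ) : ℕ :=
  Set.ncard {p : ℕ × ℕ | 1 ≤ p.2 ∧ p.2 ≤ X p.1 ∧ p.2 ≠ U p.1 ∧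
    chainD X U p.1 + min p.2 (X p.1 + 1 - p.2) ≤ n}

def chainStep (X U : ℕ → ℕ) (i : ℕ) : ℕ := min (U i) (X i + 1 - U i)

def openVertices (X U : ℕ → ℕ) (n : ℕ) : Set (ℕ × ℕ) :=
  {p | 1 ≤ p.2 ∧ p.2 ≤ X p.1 ∧ p.2 ≠ U p.1 ∧ chainD X U p.1 + min p.2 (X p.1 + 1 - p.2) ≤ n}

def chainGaps (X U : ℕ → ℕ) (n : ℕ) : Set ℕ := Set.Icc 1 n \ Set.range (chainD X U)

section ChainOfCycles

variable {X U : ℕ → ℕ}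

lemma chainD_succ (i : ℕ) : chainD X U (i + 1) = chainD X U i + chainStep X U i := rfl

lemma one_le_chainStep (hU : ∀ i, 1 ≤ U i ∧ U i ≤ X i) (i : ℕ) : 1 ≤ chainStep X U i := by
  have := hU i
  simp only [chainStep]
  omega

lemma strictMono_chainD (hU : ∀ i, 1 ≤ U i ∧ U i ≤ X i) : StrictMono (chainD X U) :=
  strictMono_nat_of_lt_succ fun i ↦ by
    rw [chainD_succ]
    have := one_le_chainStep hU i
    omega

lemma exists_chainD_lt_lt (hU : ∀ i, 1 ≤ U i ∧ U i ≤ X i) {d : ℕ}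
    (hd : d ∉ Set.range (chainD X U)) : ∃ i, chainD X U i < d ∧ d < chainD X U (i + 1) := by
  have hex : ∃ k, d < chainD X U k := ⟨d + 1, (strictMono_chainD hU).id_le (d + 1)⟩
  obtain ⟨k, hk, hmin⟩ : ∃ k, d < chainD X U k ∧ ∀ j < k, ¬ d < chainD X U j :=
    ⟨Nat.find hex, Nat.find_spec hex, fun _ ↦ Nat.find_min hex⟩
  cases k with
  | zero => simp [chainD] at hk
  | succ i =>
    exact ⟨i, (not_lt.1 (hmin i i.lt_succ_self)).lt_of_ne fun h ↦ hd ⟨i, h⟩, hk⟩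

lemma finite_openVertices (hU : ∀ i, 1 ≤ U i ∧ U i ≤ X i) (n : ℕ) :
    (openVertices X U n).Finite := by
  refine ((Set.finite_Iic n).biUnion fun i _ ↦
    (Set.finite_singleton i).prod (Set.finite_Icc 1 (X i))).subset ?_
  rintro ⟨i, j⟩ ⟨h1, hX, -, hn⟩
  have hi : i ≤ chainD X U i := (strictMono_chainD hU).id_le i
  simp only [Set.mem_iUnion, Set.mem_prod, Set.mem_singleton_iff, Set.mem_Icc, Set.mem_Iic]
  exact ⟨i, by dsimp only at hn; omega, rfl, h1, hX⟩

lemma chainGaps_subset_image_openVertices (hU : ∀ i, 1 ≤ U i ∧ U i ≤ X i) (n : ℕ) :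
    chainGaps X U n ⊆
      (fun q ↦ chainD X U q.1 + min q.2 (X q.1 + 1 - q.2)) '' openVertices X U n := by
  rintro d ⟨⟨hd1, hdn⟩, hd⟩
  obtain ⟨i, hlo, hhi⟩ := exists_chainD_lt_lt hU hd
  rw [chainD_succ, chainStep] at hhi
  have := hU i
  refine ⟨(i, d - chainD X U i), ?_, ?_⟩ <;>
    simp only [openVertices, Set.mem_ofPred_eq] <;> omega

lemma openCount_eq_ncard_openVertices (n : ℕ) :
    openCount X U n = (openVertices X U n).ncard := rfl

lemma ncard_chainGaps_le_openCount (hU : ∀ i, 1 ≤ U i ∧ U i ≤ X i) (n : ℕ) :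
    (chainGaps X U n).ncard ≤ openCount X U n := by
  rw [openCount_eq_ncard_openVertices]
  exact (Set.ncard_le_ncard (chainGaps_subset_image_openVertices hU n)
    ((finite_openVertices hU n).image _)).trans (Set.ncard_image_le (finite_openVertices hU n))

lemma finite_chainGaps (n : ℕ) : (chainGaps X U n).Finite := (Set.finite_Icc 1 n).sdiff

lemma ncard_bigSteps_le_ncard_chainGaps (hU : ∀ i, 1 ≤ U i ∧ U i ≤ X i) {m n : ℕ}
    (hm : chainD X U m ≤ n) :
    {i | i < m ∧ 1 < chainStep X U i}.ncard ≤ (chainGaps X U n).ncard := by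
  have hmono := strictMono_chainD hU
  refine Set.ncard_le_ncard_of_injOn (fun i ↦ chainD X U i + 1) ?_ ?_ (finite_chainGaps n)
  · rintro i ⟨him, hi⟩
    have hle : chainD X U (i + 1) ≤ chainD X U m := hmono.monotone him
    have hlt : chainD X U i + 1 < chainD X U (i + 1) := by rw [chainD_succ]; omega
    refine ⟨⟨by omega, by omega⟩, fun ⟨j, hj⟩ ↦ ?_⟩
    exact hmono.monotone.ne_of_lt_of_lt_nat i (lt_add_one _) hlt j hj
  · intro a _ b _ h
    exact hmono.injective (Nat.add_right_cancel h)

lemma le_ncard_chainGaps (hU : ∀ i, 1 ≤ U i ∧ U i ≤ X i) {m n : ℕ}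
    (hm : n < chainD X U m) : n + 1 - m ≤ (chainGaps X U n).ncard := by
  have hmono := strictMono_chainD hU
  have hcover : Set.Icc 1 n ⊆ chainGaps X U n ∪ chainD X U '' Set.Ico 1 m := by
    rintro d ⟨hd1, hdn⟩
    by_cases hd : d ∈ Set.range (chainD X U)
    · obtain ⟨j, rfl⟩ := hd
      refine Or.inr ⟨j, ⟨Nat.one_le_iff_ne_zero.2 ?_, hmono.lt_iff_lt.1 (hdn.trans_lt hm)⟩, rfl⟩
      rintro rfl
      simp [chainD] at hd1
    · exact Or.inl ⟨⟨hd1, hdn⟩, hd⟩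
  have hcount : n ≤ (chainGaps X U n).ncard + (m - 1) :=
    calc n = (Set.Icc 1 n).ncard := by simp
      _ ≤ (chainGaps X U n ∪ chainD X U '' Set.Ico 1 m).ncard :=
        Set.ncard_le_ncard hcover ((finite_chainGaps n).union ((Set.finite_Ico 1 m).image _))
      _ ≤ (chainGaps X U n).ncard + (chainD X U '' Set.Ico 1 m).ncard := Set.ncard_union_le _ _
      _ ≤ (chainGaps X U n).ncard + (m - 1) := by
        gcongr
        simpa using Set.ncard_image_le (f := chainD X U) (Set.finite_Ico 1 m)
  have hm0 : m ≠ 0 := by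
    rintro rfl
    simp [chainD] at hm
  omega

lemma ncard_bigSteps_le_openCount (hU : ∀ i, 1 ≤ U i ∧ U i ≤ X i) (n : ℕ) :
    {i | i < n / 2 ∧ 1 < chainStep X U i}.ncard ≤ openCount X U n := by
  refine le_trans ?_ (ncard_chainGaps_le_openCount hU n)
  rcases le_or_gt (chainD X U (n / 2)) n with hm | hm
  · exact ncard_bigSteps_le_ncard_chainGaps hU hm
  · calc {i | i < n / 2 ∧ 1 < chainStep X U i}.ncard ≤ (Set.Iio (n / 2)).ncard :=
          Set.ncard_le_ncard fun i hi ↦ hi.1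
      _ ≤ n + 1 - n / 2 := by simp; omega
      _ ≤ (chainGaps X U n).ncard := le_ncard_chainGaps hU hm

end ChainOfCycles

open scoped unitInterval

namespace ProbabilityTheory

variable {Ω ι : Type*} {mΩ : MeasurableSpace Ω} {P : Measure Ω} {p : I}

lemma hasLaw_bernoulliMeasure_of_measureReal [IsProbabilityMeasure P] {E : Ω → Prop}
    (hE : Measurable E) (hp : P.real {ω | E ω} = p) : HasLaw E Ber(True, False, p) P where
  aemeasurable := hE.aemeasurable
  map_eq := by
    refine Measure.ext_of_measureReal_singleton fun q ↦ ?_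
    rw [map_measureReal_apply hE (measurableSet_singleton q)]
    by_cases hq : q
    · simp [hq, hp]
    · have hpre : E ⁻¹' {False} = {ω | E ω}ᶜ := by ext; simp
      rw [eq_false hq, hpre, measureReal_compl (measurableSet_setOfPred.2 hE), hp]
      simp

lemma isSetBernoulli_of_iIndepFun [Countable ι] {E : ι → Ω → Prop}
    (hE : ∀ i, HasLaw (E i) Ber(True, False, p) P) (hind : iIndepFun E P) (u : Set ι) :
    IsSetBernoulli (fun ω ↦ {i | i ∈ u ∧ E i ω}) u p P := by
  have hF : ∀ i, HasLaw (fun ω ↦ i ∈ u ∧ E i ω) Ber(i ∈ u, False, p) P := fun i ↦ by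
    have hf : HasLaw (fun b : Prop ↦ i ∈ u ∧ b) Ber(i ∈ u, False, p) Ber(True, False, p) :=
      ⟨.of_discrete, by simp⟩
    exact hf.comp (hE i)
  have hjoint := (hind.comp (fun i b ↦ i ∈ u ∧ b) fun _ ↦ .of_discrete).hasLaw_infinitePi hF
    (aemeasurable_pi_iff.2 fun i ↦ (hF i).aemeasurable)
  rw [IsSetBernoulli, setBernoulli_eq_map]
  exact HasLaw.comp ⟨MeasurableEquiv.setOfPred.symm.measurable.aemeasurable, rfl⟩ hjoint

lemma hasLaw_ncard_binomial {E : ℕ → Ω → Prop} (hE : ∀ i, HasLaw (E i) Ber(True, False, p) P)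
    (hind : iIndepFun E P) (n : ℕ) :
    HasLaw (fun ω ↦ {i | i < n ∧ E i ω}.ncard) Bin(n, p) P :=
  (⟨measurable_ncard.aemeasurable, rfl⟩ : HasLaw Set.ncard Bin(n, p) setBer(Set.Iio n, p)).comp
    (isSetBernoulli_of_iIndepFun hE hind (Set.Iio n))

end ProbabilityTheory

theorem stmt4_general {Ω : Type*} [MeasureSpace Ω] [IsProbabilityMeasure (ℙ : Measure Ω)]
    (X U : ℕ → Ω → ℕ) (hXmeas : ∀ i, Measurable (X i)) (hUmeas : ∀ i, Measurable (U i))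
    (hUrange : ∀ i ω, 1 ≤ U i ω ∧ U i ω ≤ X i ω)
    (hindep : iIndepFun (fun i ω => (X i ω, U i ω)) ℙ)
    (hident : ∀ i, Measure.map (fun ω => (X i ω, U i ω)) ℙ
      = Measure.map (fun ω => (X 0 ω, U 0 ω)) ℙ)
    (p : ℝ) (hp : p = (ℙ {ω | 1 < min (U 0 ω) (X 0 ω - U 0 ω + 1)}).toReal) :
    ∀ n r : ℕ,
      (ℙ {ω | r ≤ openCount (fun k => X k ω) (fun k => U k ω) n}).toReal ≥
        ∑ k ∈ Finset.Icc r (n / 2),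
          ((n / 2).choose k : ℝ) * p ^ k * (1 - p) ^ (n / 2 - k) := by
  intro n r
  let bigStep : ℕ × ℕ → Prop := fun q ↦ 1 < min q.2 (q.1 + 1 - q.2)
  have hpair : ∀ i, Measurable fun ω ↦ (X i ω, U i ω) := fun i ↦ (hXmeas i).prodMk (hUmeas i)
  have hprob : ∀ i, (ℙ : Measure Ω).real {ω | bigStep (X i ω, U i ω)} = p := by
    intro i
    change (ℙ : Measure Ω).real ((fun ω ↦ (X i ω, U i ω)) ⁻¹' {q | bigStep q}) = p
    rw [← map_measureReal_apply (hpair i) .of_discrete, hident i,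
      map_measureReal_apply (hpair 0) .of_discrete, hp, measureReal_def]
    congr 2 with ω
    have hUX := hUrange 0 ω
    simp only [bigStep, Set.mem_preimage, Set.mem_ofPred_eq]
    omega
  let pI : I := ⟨p, hprob 0 ▸ ⟨measureReal_nonneg, measureReal_le_one⟩⟩
  have hlaw := hasLaw_ncard_binomial (p := pI)
    (fun i ↦ hasLaw_bernoulliMeasure_of_measureReal (.comp .of_discrete (hpair i)) (hprob i))
    (hindep.comp (fun _ ↦ bigStep) fun _ ↦ .of_discrete) (n / 2)
  calc ∑ k ∈ Finset.Icc r (n / 2), ((n / 2).choose k : ℝ) * p ^ k * (1 - p) ^ (n / 2 - k)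
      = Bin(n / 2, pI).real (Set.Icc r (n / 2)) := by
        rw [← Finset.coe_Icc, ← sum_measureReal_singleton]
        exact Finset.sum_congr rfl fun k _ ↦ (binomial_real_singleton (n / 2) k pI).symm
    _ = (ℙ : Measure Ω).real
          {ω | {i | i < n / 2 ∧ bigStep (X i ω, U i ω)}.ncard ∈ Set.Icc r (n / 2)} :=
        (hlaw.measureReal_eq (p := (· ∈ Set.Icc r (n / 2))) .of_discrete).symm
    _ ≤ (ℙ : Measure Ω).real {ω | r ≤ openCount (fun k => X k ω) (fun k => U k ω) n} :=
        measureReal_mono fun ω hω ↦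
          hω.1.trans (ncard_bigSteps_le_openCount (fun i ↦ hUrange i ω) n)

/-- With `Y_i = min{U_i, X_i - U_i + 1}` and `p = P(Y_i > 1)`, the number `R_n` of open
vertices of the chain within distance `n` of the root stochastically dominates a
`Binomial(⌊n/2⌋, p)` random variable. -/
theorem stmt4 {Ω : Type*} [MeasureSpace Ω] [IsProbabilityMeasure (ℙ : Measure Ω)]
    (X U : ℕ → Ω → ℕ) (hXmeas : ∀ i, Measurable (X i)) (hUmeas : ∀ i, Measurable (U i))
    (hX1 : ∀ i ω, 1 ≤ X i ω)
    (hUrange : ∀ i ω, 1 ≤ U i ω ∧ U i ω ≤ X i ω)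
    (hindep : iIndepFun (fun i ω => (X i ω, U i ω)) ℙ)
    (hident : ∀ i, Measure.map (fun ω => (X i ω, U i ω)) ℙ
      = Measure.map (fun ω => (X 0 ω, U 0 ω)) ℙ)
    (hUunif : ∀ i k j : ℕ, 1 ≤ j → j ≤ k →
      (ℙ {ω | X i ω = k ∧ U i ω = j}).toReal = (ℙ {ω | X i ω = k}).toReal / k)
    (p : ℝ) (hp : p = (ℙ {ω | 1 < min (U 0 ω) (X 0 ω - U 0 ω + 1)}).toReal) :
    ∀ n r : ℕ,
      (ℙ {ω | r ≤ openCount (fun k => X k ω) (fun k => U k ω) n}).toReal ≥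
        ∑ k ∈ Finset.Icc r (n / 2),
          ((n / 2).choose k : ℝ) * p ^ k * (1 - p) ^ (n / 2 - k) :=
  stmt4_general X U hXmeas hUmeas hUrange hindep hident p hp
end

section
/- If L is slowly varying at infinity and F(n) = ∫_{n_0}^n L(x)/x dx diverges as n → ∞, then F is slowly varying at infinity, i.e. F(λn)/F(n) → 1 for every λ > 0. -/
open MeasureTheory Filter Real

/-- A positive function `L` is slowly varying at infinity if `L(λx)/L(x) → 1` for every `λ > 0`. -/
def SlowlyVarying (L : ℝ → ℝ) : Prop :=
  ∀ lam : ℝ, 0 < lam → Tendsto (fun x => L (lam * x) / L x) atTop (nhds 1)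

/-!
Write `D(m) = F(λm) - F(m)` for `λ ≥ 1`. The substitution `x = λt` gives
`D(λm) = ∫_m^{λm} L(λt)/t dt`, so pointwise `L(λt) ≤ c L(t)` for large `t` yields
`D(λm) ≤ c D(m)` for every `c > 1` and large `m`: no uniform convergence theorem is needed.
Iterating `k` times and telescoping, `k D(n) ≤ c^k (F(n) - F(n/λ^k))`; with `c = 1 + 1/k`, so that
`c^k < e < 3`, this gives `D(n) ≤ 6 F(n)/k` once `F(n)` is large. Finally `λ < 1` reduces to `λ⁻¹ > 1`.
-/

open Set

theorem nat_mul_sub_le_pow_mul_sub {s : ℕ → ℝ} {c : ℝ} (hc : 1 ≤ c) (hs : Monotone s)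
    (h : ∀ k, s (k + 2) - s (k + 1) ≤ c * (s (k + 1) - s k)) (k : ℕ) :
    k * (s (k + 1) - s k) ≤ c ^ k * (s k - s 0) := by
  induction k with
  | zero => simp
  | succ k ih =>
    have hd : 0 ≤ s (k + 1) - s k := sub_nonneg.2 (hs k.le_succ)
    have hck : c ≤ c ^ (k + 1) := le_self_pow₀ hc k.succ_ne_zero
    calc ((k + 1 : ℕ) : ℝ) * (s (k + 2) - s (k + 1))
        ≤ (k + 1) * (c * (s (k + 1) - s k)) := by push_cast; gcongr; exact h k
      _ = c * (k * (s (k + 1) - s k)) + c * (s (k + 1) - s k) := by ring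
      _ ≤ c * (c ^ k * (s k - s 0)) + c ^ (k + 1) * (s (k + 1) - s k) := by gcongr
      _ = c ^ (k + 1) * (s (k + 1) - s 0) := by ring

theorem eventually_nat_mul_sub_le_pow_mul_sub {F : ℝ → ℝ} {lam c A : ℝ} (hlam : 1 ≤ lam)
    (hc : 1 ≤ c) (hmono : MonotoneOn F (Ici A))
    (hinc : ∀ᶠ m in atTop, F (lam * (lam * m)) - F (lam * m) ≤ c * (F (lam * m) - F m))
    (k : ℕ) :
    ∀ᶠ n in atTop, k * (F (lam * n) - F n) ≤ c ^ k * (F n - F A) := by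
  obtain ⟨N, hN⟩ := eventually_atTop.1 (hinc.and (eventually_ge_atTop (max A 0)))
  have hN0 : max A 0 ≤ N := (hN N le_rfl).2
  have hlamk : 0 < lam ^ k := by positivity
  filter_upwards [eventually_ge_atTop (lam ^ k * N)] with n hn
  set m := n / lam ^ k
  have hm : N ≤ m := (le_div_iff₀' hlamk).2 hn
  have hm0 : 0 ≤ m := (le_max_right _ _).trans (hN0.trans hm)
  have hA : A ≤ m := (le_max_left _ _).trans (hN0.trans hm)
  have hNj : ∀ j : ℕ, N ≤ lam ^ j * m := fun j =>
    hm.trans (le_mul_of_one_le_left hm0 (one_le_pow₀ hlam))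
  have hs : Monotone fun j : ℕ => F (lam ^ j * m) := by
    refine monotone_nat_of_le_succ fun j => hmono ((hN _ (hNj j)).2.trans' (le_max_left _ _))
      ((hN _ (hNj (j + 1))).2.trans' (le_max_left _ _)) ?_
    rw [pow_succ', mul_assoc]
    exact le_mul_of_one_le_left ((le_max_right _ _).trans (hN _ (hNj j)).2) hlam
  have key := nat_mul_sub_le_pow_mul_sub hc hs (fun j => by
    simpa only [pow_succ', mul_assoc] using (hN _ (hNj j)).1) k
  have hn' : lam ^ k * m = n := mul_div_cancel₀ n hlamk.ne'
  simp only [pow_succ', mul_assoc, hn', pow_zero, one_mul] at key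
  calc (k : ℝ) * (F (lam * n) - F n) ≤ c ^ k * (F n - F m) := key
    _ ≤ c ^ k * (F n - F A) := by gcongr; exact hmono self_mem_Ici hA hA

theorem tendsto_div_of_increment_le {F : ℝ → ℝ} {lam A : ℝ} (hlam : 1 ≤ lam)
    (hmono : MonotoneOn F (Ici A)) (htop : Tendsto F atTop atTop)
    (hinc : ∀ c > 1, ∀ᶠ m in atTop,
      F (lam * (lam * m)) - F (lam * m) ≤ c * (F (lam * m) - F m)) :
    Tendsto (fun n => F (lam * n) / F n) atTop (nhds 1) := by
  have hpos : ∀ᶠ n in atTop, 0 < F n := htop.eventually_gt_atTop 0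
  have hD : ∀ᶠ n in atTop, 0 ≤ F (lam * n) - F n := by
    filter_upwards [eventually_ge_atTop (max A 0)] with n hn
    have hnA : A ≤ n := (le_max_left _ _).trans hn
    have hnlam : n ≤ lam * n := le_mul_of_one_le_left ((le_max_right _ _).trans hn) hlam
    exact sub_nonneg.2 (hmono hnA (hnA.trans hnlam) hnlam)
  suffices h : Tendsto (fun n => (F (lam * n) - F n) / F n) atTop (nhds 0) by
    have h1 := h.const_add 1
    rw [add_zero] at h1
    refine h1.congr' ?_
    filter_upwards [hpos] with n hn
    field_simp
    ring
  refine tendsto_order.2 ⟨fun a ha => ?_, fun δ hδ => ?_⟩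
  · filter_upwards [hpos, hD] with n hn hDn
    exact ha.trans_le (div_nonneg hDn hn.le)
  obtain ⟨k, hk⟩ := exists_nat_gt (6 / δ)
  have hk0 : (0 : ℝ) < k := (by positivity : (0 : ℝ) < 6 / δ).trans hk
  have hc3 : (1 + (k : ℝ)⁻¹) ^ k < 3 := one_add_inv_pow_le_exp.trans_lt exp_one_lt_three
  have hc : 1 < 1 + (k : ℝ)⁻¹ := by simpa using hk0
  filter_upwards [eventually_nat_mul_sub_le_pow_mul_sub hlam hc.le hmono (hinc _ hc) k, hpos, hD,
    htop.eventually_ge_atTop |F A|] with n hkn hn hDn hFA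
  rw [div_lt_iff₀ hn, ← mul_lt_mul_iff_of_pos_left hk0]
  rw [div_lt_iff₀ hδ] at hk
  calc (k : ℝ) * (F (lam * n) - F n) ≤ (1 + (k : ℝ)⁻¹) ^ k * (F n - F A) := by linarith
    _ ≤ 3 * (2 * F n) := by
      gcongr
      · linarith [le_abs_self (F A)]
      · linarith [neg_abs_le (F A)]
    _ < k * (δ * F n) := by nlinarith

theorem SlowlyVarying.of_one_le {G : ℝ → ℝ}
    (h : ∀ lam, 1 ≤ lam → Tendsto (fun x => G (lam * x) / G x) atTop (nhds 1)) :
    SlowlyVarying G := by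
  intro lam hlam
  rcases le_or_gt 1 lam with h1 | h1
  · exact h lam h1
  have hinv := ((h lam⁻¹ (one_le_inv₀ hlam |>.2 h1.le)).comp
    (tendsto_id.const_mul_atTop hlam)).inv₀ one_ne_zero
  rw [inv_one] at hinv
  refine hinv.congr fun x => ?_
  simp [inv_mul_cancel_left₀ hlam.ne']

theorem integral_mul_left_le_mul_integral {g : ℝ → ℝ} {lam c a b : ℝ} (hlam : lam ≠ 0)
    (hab : a ≤ b)
    (hg : IntervalIntegrable g volume a b) (hg' : IntervalIntegrable g volume (lam * a) (lam * b))
    (h : ∀ t ∈ Icc a b, lam * g (lam * t) ≤ c * g t) :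
    ∫ x in lam * a..lam * b, g x ≤ c * ∫ x in a..b, g x := by
  rw [← intervalIntegral.mul_integral_comp_mul_left, ← intervalIntegral.integral_const_mul,
    ← intervalIntegral.integral_const_mul]
  refine intervalIntegral.integral_mono_on hab ?_ (hg.const_mul c) h
  simpa only [mul_div_cancel_left₀ _ hlam] using (hg'.comp_mul_left (c := lam)).const_mul lam

section IntegralFunction

variable {f F : ℝ → ℝ} {a : ℝ}

theorem intervalIntegrable_of_tendsto_atTop (hF : ∀ n, F n = ∫ x in a..n, f x)
    (htop : Tendsto F atTop atTop) {b c : ℝ} (hb : a ≤ b) (hc : a ≤ c) :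
    IntervalIntegrable f volume b c := by
  have hbase : ∀ {d}, a ≤ d → IntervalIntegrable f volume a d := fun {d} had => by
    obtain ⟨e, he, hde⟩ := ((htop.eventually_ne_atTop 0).and (eventually_ge_atTop d)).exists
    -- the integral of a non-integrable function is `0`, so divergence forces integrability
    have hae : IntervalIntegrable f volume a e := by
      by_contra h
      exact he (hF e ▸ intervalIntegral.integral_undef h)
    exact hae.mono_set (uIcc_subset_uIcc_left (uIcc_of_le (had.trans hde) ▸ ⟨had, hde⟩))
  exact (hbase hb).symm.trans (hbase hc)

theorem sub_eq_integral_of_tendsto_atTop (hF : ∀ n, F n = ∫ x in a..n, f x)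
    (htop : Tendsto F atTop atTop) {b c : ℝ} (hb : a ≤ b) (hc : a ≤ c) :
    F c - F b = ∫ x in b..c, f x := by
  rw [hF, hF, intervalIntegral.integral_interval_sub_left
    (intervalIntegrable_of_tendsto_atTop hF htop le_rfl hc)
    (intervalIntegrable_of_tendsto_atTop hF htop le_rfl hb)]

theorem monotoneOn_of_tendsto_atTop (hF : ∀ n, F n = ∫ x in a..n, f x)
    (htop : Tendsto F atTop atTop) (hf : ∀ x ∈ Ici a, 0 ≤ f x) : MonotoneOn F (Ici a) :=
  fun _ hb _ hc hbc => sub_nonneg.1 <| sub_eq_integral_of_tendsto_atTop hF htop hb hc ▸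
    intervalIntegral.integral_nonneg hbc fun x hx => hf x (mem_Ici.2 (hb.trans hx.1))

theorem sub_le_mul_sub_of_tendsto_atTop (hF : ∀ n, F n = ∫ x in a..n, f x)
    (htop : Tendsto F atTop atTop) {lam c m : ℝ} (hlam : 1 ≤ lam) (ham : a ≤ m) (hm : 0 ≤ m)
    (h : ∀ t ∈ Icc m (lam * m), lam * f (lam * t) ≤ c * f t) :
    F (lam * (lam * m)) - F (lam * m) ≤ c * (F (lam * m) - F m) := by
  have hm₁ : m ≤ lam * m := le_mul_of_one_le_left hm hlam
  have hm₂ : lam * m ≤ lam * (lam * m) := le_mul_of_one_le_left (hm.trans hm₁) hlam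
  rw [sub_eq_integral_of_tendsto_atTop hF htop (ham.trans hm₁) (ham.trans (hm₁.trans hm₂)),
    sub_eq_integral_of_tendsto_atTop hF htop ham (ham.trans hm₁)]
  exact integral_mul_left_le_mul_integral (zero_lt_one.trans_le hlam).ne' hm₁
    (intervalIntegrable_of_tendsto_atTop hF htop ham (ham.trans hm₁))
    (intervalIntegrable_of_tendsto_atTop hF htop (ham.trans hm₁) (ham.trans (hm₁.trans hm₂)))
    h

end IntegralFunction

/-- If `L` is slowly varying and `F(n) = ∫_{n₀}^n L(x)/x dx` diverges, then `F` is
slowly varying at infinity. -/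
theorem stmt9 (L : ℝ → ℝ) (hLpos : ∀ x > 0, 0 < L x) (hL : SlowlyVarying L)
    (n₀ : ℝ) (hn₀ : 0 < n₀)
    (F : ℝ → ℝ) (hF : ∀ n : ℝ, F n = ∫ x in n₀..n, L x / x)
    (hdiv : Tendsto F atTop atTop) :
    ∀ lam : ℝ, 0 < lam → Tendsto (fun n => F (lam * n) / F n) atTop (nhds 1) := by
  have hmono : MonotoneOn F (Ici n₀) := monotoneOn_of_tendsto_atTop hF hdiv fun x hx =>
    div_nonneg (hLpos x (hn₀.trans_le hx)).le (hn₀.trans_le hx).le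
  refine SlowlyVarying.of_one_le fun lam hlam =>
    tendsto_div_of_increment_le hlam hmono hdiv fun c hc => ?_
  have hlam0 : 0 < lam := zero_lt_one.trans_le hlam
  obtain ⟨N, hN⟩ := eventually_atTop.1 ((hL lam hlam0).eventually_lt_const hc)
  filter_upwards [eventually_ge_atTop (max N n₀)] with m hm
  have hm₀ : n₀ ≤ m := (le_max_right _ _).trans hm
  refine sub_le_mul_sub_of_tendsto_atTop hF hdiv hlam hm₀ (hn₀.le.trans hm₀) fun t ht => ?_
  have ht0 : 0 < t := hn₀.trans_le (hm₀.trans ht.1)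
  have hLt : L (lam * t) ≤ c * L t :=
    ((div_lt_iff₀ (hLpos t ht0)).1 (hN t ((le_max_left _ _).trans (hm.trans ht.1)))).le
  calc lam * (L (lam * t) / (lam * t)) = L (lam * t) / t := by field_simp
    _ ≤ c * L t / t := by gcongr
    _ = c * (L t / t) := mul_div_assoc _ _ _
end

section
/- With ξ, ξ̂ as above and c > 0 fixed, there is a constant C > 0 such that E(1 − (1 − c/n)^{ξ̂}) ≤ C n^{1-α} L_1(n) for all sufficiently large n. -/
/-!
Since `1 - x ^ k ≤ min 1 (k * (1 - x))` for `0 ≤ x ≤ 1`, the expectation is at most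
`P(ξ̂ > n) + (c / n) E(ξ̂; ξ̂ ≤ n)`, and `E(ξ̂; ξ̂ ≤ n) = E(ξ²; ξ ≤ n) = n^(2-α) L₁(n)`.
For the tail, `P(m < ξ̂ ≤ 2m) ≤ E(ξ²; ξ ≤ 2m) / m`. Because `α > 1` and `L₁` is slowly varying,
`x^(2-α) L₁(x)` grows by a factor at most `2ρ` with `ρ < 1` at each doubling of a large `x`, so the
dyadic blocks above `n` have geometrically decreasing masses and
`P(ξ̂ > n) ≤ 2ρ / (1 - ρ) · n^(1-α) L₁(n)`.
-/

open MeasureTheory ProbabilityTheory Filter Real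

open scoped Topology

lemma le_div_one_sub_of_sub_succ_le_geometric {a : ℕ → ℝ} {b ρ : ℝ}
    (ha : Tendsto a atTop (𝓝 0)) (hρ0 : 0 ≤ ρ) (hρ1 : ρ < 1)
    (h : ∀ j, a j - a (j + 1) ≤ b * ρ ^ j) : a 0 ≤ b / (1 - ρ) := by
  have hgeom : HasSum (fun j => b * ρ ^ j) (b / (1 - ρ)) := by
    simpa [div_eq_mul_inv] using (hasSum_geometric_of_lt_one hρ0 hρ1).mul_left b
  refine le_of_tendsto_of_tendsto' (by simpa using ha.const_sub (a 0)) hgeom.tendsto_sum_nat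
    fun J => ?_
  rw [← Finset.sum_range_sub']
  exact Finset.sum_le_sum fun j _ => h j

lemma pow_two_mul_le_of_two_mul_le {f : ℝ → ℝ} {r X₀ x : ℝ} (hr : 0 ≤ r)
    (h : ∀ y, X₀ ≤ y → f (2 * y) ≤ r * f y) (hx0 : 0 ≤ x) (hx : X₀ ≤ x) :
    ∀ j : ℕ, f (2 ^ j * x) ≤ r ^ j * f x
  | 0 => by simp
  | j + 1 => by
    have hjx : X₀ ≤ 2 ^ j * x := hx.trans (le_mul_of_one_le_left hx0 (one_le_pow₀ one_le_two))
    calc f (2 ^ (j + 1) * x) = f (2 * (2 ^ j * x)) := by ring_nf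
      _ ≤ r * f (2 ^ j * x) := h _ hjx
      _ ≤ r * (r ^ j * f x) :=
          mul_le_mul_of_nonneg_left (pow_two_mul_le_of_two_mul_le hr h hx0 hx j) hr
      _ = r ^ (j + 1) * f x := by ring

lemma SlowlyVarying.eventually_two_mul_le {L : ℝ → ℝ} (hL : SlowlyVarying L)
    (hpos : ∀ x > 0, 0 < L x) {β r : ℝ} (hr : (2 : ℝ) ^ β < r) :
    ∀ᶠ x in atTop, (2 * x) ^ β * L (2 * x) ≤ r * (x ^ β * L x) := by
  have h2β : 0 < (2 : ℝ) ^ β := rpow_pos_of_pos two_pos β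
  have hratio : ∀ᶠ x in atTop, L (2 * x) / L x < r / 2 ^ β :=
    (hL 2 two_pos).eventually_lt_const ((one_lt_div h2β).mpr hr)
  filter_upwards [hratio, eventually_gt_atTop 0] with x hx hx0
  have hLx := hpos x hx0
  rw [div_lt_div_iff₀ hLx h2β] at hx
  rw [mul_rpow zero_le_two hx0.le]
  nlinarith [rpow_pos_of_pos hx0 β]

lemma SlowlyVarying.exists_two_mul_le {L : ℝ → ℝ} (hL : SlowlyVarying L)
    (hpos : ∀ x > 0, 0 < L x) {β : ℝ} (hβ : β < 1) :
    ∃ ρ, 0 ≤ ρ ∧ ρ < 1 ∧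
      ∃ X₀, ∀ x, X₀ ≤ x → (2 * x) ^ β * L (2 * x) ≤ 2 * ρ * (x ^ β * L x) := by
  have h2β : (2 : ℝ) ^ (β - 1) < 1 := rpow_lt_one_of_one_lt_of_neg one_lt_two (by linarith)
  have hr : (2 : ℝ) ^ β < 2 * ((1 + 2 ^ (β - 1)) / 2) := by
    rw [show β = 1 + (β - 1) by ring, rpow_add two_pos, rpow_one, add_sub_cancel_left]
    linarith
  exact ⟨_, by positivity, by linarith, eventually_atTop.mp (hL.eventually_two_mul_le hpos hr)⟩

def truncSecondMoment (p : ℕ → ℝ) (m : ℕ) : ℝ :=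
  ∑ i ∈ Finset.range (m + 1), (i : ℝ) ^ 2 * p i

section SizeBiased

variable {p : ℕ → ℝ}

lemma sum_range_two_mul_sub_sum_range_le (hp : ∀ i, 0 ≤ p i) {m : ℕ} (hm : 0 < m) :
    ∑ i ∈ Finset.range (2 * m + 1), (i : ℝ) * p i - ∑ i ∈ Finset.range (m + 1), (i : ℝ) * p i
      ≤ truncSecondMoment p (2 * m) / m := by
  have hm' : (0 : ℝ) < m := by exact_mod_cast hm
  rw [← Finset.sum_range_add_sum_Ico _ (by omega : m + 1 ≤ 2 * m + 1), add_sub_cancel_left,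
    truncSecondMoment, Finset.sum_div]
  calc ∑ i ∈ Finset.Ico (m + 1) (2 * m + 1), (i : ℝ) * p i
      ≤ ∑ i ∈ Finset.Ico (m + 1) (2 * m + 1), (i : ℝ) ^ 2 * p i / m := by
        refine Finset.sum_le_sum fun i hi => ?_
        have hmi : (m : ℝ) ≤ i := by
          exact_mod_cast (Finset.mem_Ico.mp hi).1.trans' m.le_succ
        rw [le_div_iff₀ hm']
        nlinarith [mul_nonneg (Nat.cast_nonneg (α := ℝ) i) (hp i)]
    _ ≤ ∑ i ∈ Finset.range (2 * m + 1), (i : ℝ) ^ 2 * p i / m :=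
        Finset.sum_le_sum_of_subset_of_nonneg (fun i hi => by simp at hi ⊢; omega)
          fun i _ _ => div_nonneg (mul_nonneg (sq_nonneg _) (hp i)) hm'.le

lemma one_sub_sum_range_mul_le (hp : ∀ i, 0 ≤ p i) (hq : HasSum (fun i : ℕ => (i : ℝ) * p i) 1)
    {ρ : ℝ} (hρ0 : 0 ≤ ρ) (hρ1 : ρ < 1) {n : ℕ} (hn : 0 < n)
    (hV : ∀ j : ℕ,
      truncSecondMoment p (2 ^ (j + 1) * n) ≤ (2 * ρ) ^ (j + 1) * truncSecondMoment p n) :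
    1 - ∑ i ∈ Finset.range (n + 1), (i : ℝ) * p i
      ≤ 2 * ρ / (1 - ρ) * (truncSecondMoment p n / n) := by
  set a : ℕ → ℝ := fun j => 1 - ∑ i ∈ Finset.range (2 ^ j * n + 1), (i : ℝ) * p i
  have ha : Tendsto a atTop (𝓝 0) := by
    have hscale : Tendsto (fun j : ℕ => 2 ^ j * n + 1) atTop atTop :=
      tendsto_atTop_mono (fun j => (Nat.lt_two_pow_self.le.trans
        (Nat.le_mul_of_pos_right _ hn)).trans (Nat.le_succ _)) tendsto_id
    simpa using (hq.tendsto_sum_nat.comp hscale).const_sub 1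
  have hstep : ∀ j, a j - a (j + 1) ≤ 2 * ρ * (truncSecondMoment p n / n) * ρ ^ j := by
    intro j
    have hblock := sum_range_two_mul_sub_sum_range_le hp (by positivity : 0 < 2 ^ j * n)
    rw [show 2 * (2 ^ j * n) = 2 ^ (j + 1) * n by ring] at hblock
    have h2jn : (0 : ℝ) < 2 ^ j * n := by positivity
    calc a j - a (j + 1) ≤ truncSecondMoment p (2 ^ (j + 1) * n) / (2 ^ j * n) := by
          simp only [a]; push_cast at hblock; linarith
      _ ≤ (2 * ρ) ^ (j + 1) * truncSecondMoment p n / (2 ^ j * n) := by gcongr; exact hV j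
      _ = 2 * ρ * (truncSecondMoment p n / n) * ρ ^ j := by field_simp; ring
  have h0 := le_div_one_sub_of_sub_succ_le_geometric ha hρ0 hρ1 hstep
  simp only [a, pow_zero, one_mul] at h0
  exact h0.trans_eq (by ring)

lemma exists_one_sub_sum_range_mul_le (hp : ∀ i, 0 ≤ p i)
    (hq : HasSum (fun i : ℕ => (i : ℝ) * p i) 1) {L : ℝ → ℝ} (hL : SlowlyVarying L)
    (hpos : ∀ x > 0, 0 < L x) {β : ℝ} (hβ : β < 1)
    (hV : ∀ m : ℕ, 1 ≤ m → truncSecondMoment p m = (m : ℝ) ^ β * L m) :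
    ∃ C, 0 ≤ C ∧ ∃ N : ℕ, ∀ n, N ≤ n →
      1 - ∑ i ∈ Finset.range (n + 1), (i : ℝ) * p i ≤ C * (truncSecondMoment p n / n) := by
  obtain ⟨ρ, hρ0, hρ1, X₀, hX₀⟩ := hL.exists_two_mul_le hpos hβ
  refine ⟨2 * ρ / (1 - ρ), div_nonneg (by positivity) (sub_pos.mpr hρ1).le, ⌈X₀⌉₊ + 1,
    fun n hn => one_sub_sum_range_mul_le hp hq hρ0 hρ1 (by omega) fun j => ?_⟩
  have hnX : X₀ ≤ n := (Nat.le_ceil _).trans (by exact_mod_cast (by omega : ⌈X₀⌉₊ ≤ n))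
  rw [hV _ (Nat.mul_pos (Nat.two_pow_pos _) (by omega)), hV n (by omega)]
  push_cast
  exact pow_two_mul_le_of_two_mul_le (f := fun x => x ^ β * L x) (by positivity) hX₀
    (Nat.cast_nonneg n) hnX (j + 1)

end SizeBiased

section Law

variable {Ω : Type*} [MeasurableSpace Ω] {μ : Measure Ω} {X : Ω → ℕ}

lemma integrable_comp_of_abs_le [IsFiniteMeasure μ] (hX : Measurable X) {f : ℕ → ℝ} {C : ℝ}
    (hf : ∀ i, |f i| ≤ C) : Integrable (fun ω => f (X ω)) μ :=
  Integrable.of_bound ((measurable_of_countable f).comp hX).aestronglyMeasurable C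
    (ae_of_all _ fun ω => hf (X ω))

lemma integral_comp_eq_tsum [IsFiniteMeasure μ] (hX : Measurable X) {f : ℕ → ℝ} {C : ℝ}
    (hf : ∀ i, |f i| ≤ C) :
    ∫ ω, f (X ω) ∂μ = ∑' i, (μ {ω | X ω = i}).toReal * f i := by
  have hfm : AEStronglyMeasurable f (μ.map X) :=
    (measurable_of_countable f).aestronglyMeasurable
  rw [← integral_map hX.aemeasurable hfm,
    integral_countable (Integrable.of_bound hfm C (ae_of_all _ hf))]
  congr 1 with i
  rw [measureReal_def, Measure.map_apply hX (measurableSet_singleton i), smul_eq_mul]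
  rfl

lemma abs_le_sum_abs_of_eq_zero {f : ℕ → ℝ} {s : Finset ℕ} (hf : ∀ i ∉ s, f i = 0) (i : ℕ) :
    |f i| ≤ ∑ j ∈ s, |f j| := by
  by_cases hi : i ∈ s
  · exact Finset.single_le_sum (fun j _ => abs_nonneg (f j)) hi
  · simpa [hf i hi] using Finset.sum_nonneg fun j _ => abs_nonneg (f j)

lemma integral_comp_eq_sum [IsFiniteMeasure μ] (hX : Measurable X) {f : ℕ → ℝ} {s : Finset ℕ}
    (hf : ∀ i ∉ s, f i = 0) :
    ∫ ω, f (X ω) ∂μ = ∑ i ∈ s, (μ {ω | X ω = i}).toReal * f i := by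
  rw [integral_comp_eq_tsum hX (abs_le_sum_abs_of_eq_zero hf),
    tsum_eq_sum fun i hi => by simp [hf i hi]]

lemma setIntegral_sq_of_le_eq_sum [IsFiniteMeasure μ] (hX : Measurable X) (m : ℕ) :
    ∫ ω in {ω | X ω ≤ m}, (X ω : ℝ) ^ 2 ∂μ
      = ∑ i ∈ Finset.range (m + 1), (i : ℝ) ^ 2 * (μ {ω | X ω = i}).toReal := by
  set f : ℕ → ℝ := fun i => if i ≤ m then (i : ℝ) ^ 2 else 0
  have hf : ∀ i ∉ Finset.range (m + 1), f i = 0 :=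
    fun i hi => if_neg (by simpa [Nat.lt_succ_iff] using hi)
  have hs : MeasurableSet {ω | X ω ≤ m} := hX measurableSet_Iic
  have hind : {ω | X ω ≤ m}.indicator (fun ω => (X ω : ℝ) ^ 2) = fun ω => f (X ω) := by
    ext ω
    by_cases h : X ω ≤ m <;> simp [f, Set.indicator, h]
  rw [← integral_indicator hs, hind, integral_comp_eq_sum hX hf]
  refine Finset.sum_congr rfl fun i hi => ?_
  rw [show f i = (i : ℝ) ^ 2 from if_pos (Nat.lt_succ_iff.mp (Finset.mem_range.mp hi)), mul_comm]

lemma hasSum_measure_eq_toReal [IsProbabilityMeasure μ] (hX : Measurable X) :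
    HasSum (fun i => (μ {ω | X ω = i}).toReal) 1 := by
  have htot : ∑' i, μ (X ⁻¹' {i}) = 1 := by
    rw [← tsum_univ, tsum_measure_preimage_singleton Set.countable_univ
      (fun i _ => hX (measurableSet_singleton i))]
    simp
  have h := ENNReal.hasSum_toReal (htot ▸ ENNReal.one_ne_top)
  rwa [← ENNReal.tsum_toReal_eq (fun i => measure_ne_top μ _), htot, ENNReal.toReal_one] at h

lemma one_sub_pow_le_mul_one_sub {x : ℝ} (hx0 : 0 ≤ x) (k : ℕ) : 1 - x ^ k ≤ k * (1 - x) := by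
  nlinarith [one_add_mul_sub_le_pow (by linarith : -1 ≤ x) k]

lemma integral_one_sub_pow_le [IsProbabilityMeasure μ] (hX : Measurable X) {x : ℝ}
    (hx0 : 0 ≤ x) (hx1 : x ≤ 1) (n : ℕ) :
    ∫ ω, (1 - x ^ X ω) ∂μ ≤ (1 - ∑ i ∈ Finset.range (n + 1), (μ {ω | X ω = i}).toReal)
      + (1 - x) * ∑ i ∈ Finset.range (n + 1), (i : ℝ) * (μ {ω | X ω = i}).toReal := by
  set s := Finset.range (n + 1)
  -- the majorant `min 1 (k * (1 - x))` of `1 - x ^ k`, as `1 + h k` with `h` finitely supported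
  set h : ℕ → ℝ := fun k => if k ∈ s then (1 - x) * k - 1 else 0
  have hh : ∀ k ∉ s, h k = 0 := fun k hk => if_neg hk
  have hh_int : Integrable (fun ω => h (X ω)) μ :=
    integrable_comp_of_abs_le hX (abs_le_sum_abs_of_eq_zero hh)
  have hpt : ∀ k : ℕ, 1 - x ^ k ≤ 1 + h k := fun k => by
    by_cases hk : k ∈ s
    · simp only [h, if_pos hk]
      linarith [one_sub_pow_le_mul_one_sub hx0 k]
    · simp only [h, if_neg hk]
      linarith [pow_nonneg hx0 k]
  have hbound : ∀ k : ℕ, |1 - x ^ k| ≤ 1 := fun k =>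
    abs_le.mpr ⟨by linarith [pow_le_one₀ hx0 hx1 (n := k)], by linarith [pow_nonneg hx0 k]⟩
  calc ∫ ω, (1 - x ^ X ω) ∂μ ≤ ∫ ω, (1 + h (X ω)) ∂μ :=
        integral_mono (integrable_comp_of_abs_le hX hbound) ((integrable_const 1).add hh_int)
          fun ω => hpt (X ω)
    _ = 1 + ∑ i ∈ s, (μ {ω | X ω = i}).toReal * h i := by
        rw [integral_add (integrable_const 1) hh_int, integral_comp_eq_sum hX hh]
        simp
    _ = _ := by
        rw [Finset.mul_sum, sub_add, ← Finset.sum_sub_distrib, sub_eq_add_neg,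
          ← Finset.sum_neg_distrib]
        refine congrArg (1 + ·) (Finset.sum_congr rfl fun i hi => ?_)
        simp only [h, if_pos hi]
        ring

end Law

theorem stmt12_general {Ω : Type*} [MeasureSpace Ω] [IsProbabilityMeasure (ℙ : Measure Ω)]
    (α : ℝ) (hα1 : 1 < α)
    (L₁ : ℝ → ℝ) (hLpos : ∀ x > 0, 0 < L₁ x) (hL : SlowlyVarying L₁)
    (ξ ξhat : Ω → ℕ) (hmeasξ : Measurable ξ) (hmeasξhat : Measurable ξhat)
    (htrunc : ∀ n : ℕ, 1 ≤ n →
      ∫ ω in {ω | ξ ω ≤ n}, ((ξ ω : ℝ)) ^ 2 = (n : ℝ) ^ ((2 : ℝ) - α) * L₁ n)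
    (hbias : ∀ i : ℕ, (ℙ {ω | ξhat ω = i}).toReal = i * (ℙ {ω | ξ ω = i}).toReal)
    (c : ℝ) (hc : 0 < c) :
    ∃ C : ℝ, 0 < C ∧ ∃ N : ℕ, ∀ n : ℕ, N ≤ n →
      ∫ ω, (1 - (1 - c / (n : ℝ)) ^ (ξhat ω)) ≤ C * (n : ℝ) ^ ((1 : ℝ) - α) * L₁ n := by
  set p : ℕ → ℝ := fun i => (ℙ {ω | ξ ω = i}).toReal
  have hV : ∀ m : ℕ, 1 ≤ m → truncSecondMoment p m = (m : ℝ) ^ (2 - α) * L₁ m :=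
    fun m hm => (setIntegral_sq_of_le_eq_sum hmeasξ m).symm.trans (htrunc m hm)
  have hq : HasSum (fun i : ℕ => (i : ℝ) * p i) 1 := by
    simpa only [hbias] using hasSum_measure_eq_toReal (μ := ℙ) hmeasξhat
  obtain ⟨K, hK, N, htail⟩ := exists_one_sub_sum_range_mul_le
    (fun i => ENNReal.toReal_nonneg) hq hL hLpos (by linarith : 2 - α < 1) hV
  refine ⟨c + K, by positivity, max N (⌈c⌉₊ + 1), fun n hn => ?_⟩
  have hn0 : 0 < n := by omega
  have hnpos : (0 : ℝ) < n := by exact_mod_cast hn0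
  have hcn : c / n ≤ 1 :=
    (div_le_one hnpos).mpr ((Nat.le_ceil c).trans (by exact_mod_cast (by omega : ⌈c⌉₊ ≤ n)))
  have hint := integral_one_sub_pow_le (μ := ℙ) hmeasξhat (x := 1 - c / n) (by linarith)
    (by linarith [div_pos hc hnpos]) n
  simp only [hbias, sub_sub_cancel] at hint
  have hsq : ∑ i ∈ Finset.range (n + 1), (i : ℝ) * (i * p i) = truncSecondMoment p n :=
    Finset.sum_congr rfl fun i _ => by ring
  have hVn : truncSecondMoment p n / n = n ^ (1 - α) * L₁ n := by
    rw [hV n hn0, show (1 : ℝ) - α = (2 - α) - 1 by ring, rpow_sub_one hnpos.ne']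
    ring
  calc ∫ ω, (1 - (1 - c / (n : ℝ)) ^ (ξhat ω))
      ≤ (1 - ∑ i ∈ Finset.range (n + 1), (i : ℝ) * p i)
          + c * (truncSecondMoment p n / n) := by
        rw [← hsq, mul_div_assoc', ← div_mul_eq_mul_div]; exact hint
    _ ≤ K * (truncSecondMoment p n / n) + c * (truncSecondMoment p n / n) := by
        gcongr; exact htail n (le_of_max_le_left hn)
    _ = (c + K) * (n : ℝ) ^ ((1 : ℝ) - α) * L₁ n := by
        rw [hVn]; ring

/-- With `ξ` critical, `E(ξ² 1_{ξ≤n}) = n^(2-α) L₁(n)`, `ξ̂` size-biased and `c > 0` fixed,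
there is `C > 0` with `E(1 - (1 - c/n)^ξ̂) ≤ C n^(1-α) L₁(n)` for all sufficiently large `n`. -/
theorem stmt12 {Ω : Type*} [MeasureSpace Ω] [IsProbabilityMeasure (ℙ : Measure Ω)]
    (α : ℝ) (hα1 : 1 < α) (hα2 : α ≤ 2)
    (L₁ : ℝ → ℝ) (hLpos : ∀ x > 0, 0 < L₁ x) (hL : SlowlyVarying L₁)
    (ξ ξhat : Ω → ℕ) (hmeasξ : Measurable ξ) (hmeasξhat : Measurable ξhat)
    (hmean : ∫ ω, (ξ ω : ℝ) = 1)
    (htrunc : ∀ n : ℕ, 1 ≤ n →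
      ∫ ω in {ω | ξ ω ≤ n}, ((ξ ω : ℝ)) ^ 2 = (n : ℝ) ^ ((2 : ℝ) - α) * L₁ n)
    (hbias : ∀ i : ℕ, (ℙ {ω | ξhat ω = i}).toReal = i * (ℙ {ω | ξ ω = i}).toReal)
    (c : ℝ) (hc : 0 < c) :
    ∃ C : ℝ, 0 < C ∧ ∃ N : ℕ, ∀ n : ℕ, N ≤ n →
      ∫ ω, (1 - (1 - c / (n : ℝ)) ^ (ξhat ω)) ≤ C * (n : ℝ) ^ ((1 : ℝ) - α) * L₁ n :=
  stmt12_general α hα1 L₁ hLpos hL ξ ξhat hmeasξ hmeasξhat htrunc hbias c hc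
end

section
/- Let ξ̂ be size-biased as above, and given ξ̂, let U be uniform on {1,...,ξ̂}; set Y = min{U, ξ̂ − U + 1}. Then E(1 − e^{−Y/n}) ≥ (1/(8n)) E(ξ² 1_{ξ≤n}) = (1/8) n^{1-α} L_1(n). -/
open MeasureTheory ProbabilityTheory Filter Real

/-!
Since `Y ≤ ξ̂`, on `{ξ̂ ≤ n}` we have `Y / n ≤ 1` and hence `1 - e^{-Y/n} ≥ Y / (2n)`. Given
`ξ̂ = k`, `U` is uniform on `{1, …, k}` and `∑_{j=1}^k min(j, k - j + 1) ≥ k² / 4`, so the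
event `ξ̂ = k ≤ n` contributes at least `k P(ξ̂ = k) / (8n)`. Summing over `k ≤ n` and using the
size bias `k P(ξ̂ = k) = k² P(ξ = k)` gives `E(ξ² 1_{ξ ≤ n}) / (8n)`.
-/

open Finset

theorem sum_range_min_add_two (k : ℕ) :
    ∑ j ∈ range (k + 2), min (j + 1) (k + 2 - j) =
      ∑ j ∈ range k, min (j + 1) (k - j) + (k + 2) := by
  rw [sum_range_succ, sum_range_succ']
  have hshift : ∀ j ∈ range k, min (j + 1 + 1) (k + 2 - (j + 1)) = min (j + 1) (k - j) + 1 := by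
    intro j hj
    rw [show k + 2 - (j + 1) = k - j + 1 by grind, Nat.succ_min_succ]
  rw [sum_congr rfl hshift, sum_add_distrib]
  simp
  omega

theorem sq_le_four_mul_sum_range_min (k : ℕ) :
    k ^ 2 ≤ 4 * ∑ j ∈ range k, min (j + 1) (k - j) := by
  induction k using Nat.strong_induction_on with
  | _ k ih =>
    match k with
    | 0 | 1 => simp
    | m + 2 =>
      rw [sum_range_min_add_two]
      nlinarith [ih m (by omega)]

theorem sq_div_four_le_sum_Icc_min (k : ℕ) :
    (k : ℝ) ^ 2 / 4 ≤ ∑ j ∈ Icc 1 k, min (j : ℝ) (k - j + 1) := by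
  have hcast : ∑ j ∈ Icc 1 k, min (j : ℝ) (k - j + 1) =
      ∑ j ∈ range k, ((min (j + 1) (k - j) : ℕ) : ℝ) := by
    rw [← Ico_add_one_right_eq_Icc, sum_Ico_eq_sum_range, Nat.add_sub_cancel]
    refine sum_congr rfl fun j hj => ?_
    rw [mem_range] at hj
    push_cast [hj.le]
    congr 1 <;> ring
  rw [hcast, ← Nat.cast_sum, div_le_iff₀ (by norm_num)]
  exact_mod_cast (sq_le_four_mul_sum_range_min k).trans_eq (mul_comm _ _)

theorem half_le_one_sub_exp_neg {x : ℝ} (h0 : 0 ≤ x) (h1 : x ≤ 1) : x / 2 ≤ 1 - exp (-x) :=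
  calc x / 2 ≤ x / (x + 1) := div_le_div_of_nonneg_left h0 (by linarith) (by linarith)
    _ = 1 - (x + 1)⁻¹ := by field_simp; ring
    _ ≤ 1 - exp (-x) := by
      rw [exp_neg]
      gcongr
      exact add_one_le_exp x

theorem mul_div_le_sum_Icc_one_sub_exp {n k : ℕ} (hk : k ≤ n) {p : ℝ} (hp : 0 ≤ p) :
    k * p / (8 * n) ≤ ∑ j ∈ Icc 1 k, p / k * (1 - exp (-min (j : ℝ) (k - j + 1) / n)) := by
  rcases Nat.eq_zero_or_pos k with rfl | hk0
  · simp
  have hn : (0 : ℝ) < n := by exact_mod_cast hk0.trans_le hk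
  have hterm : ∀ j ∈ Icc 1 k, p / k * (min (j : ℝ) (k - j + 1) / (2 * n)) ≤
      p / k * (1 - exp (-min (j : ℝ) (k - j + 1) / n)) := by
    intro j hj
    rw [mem_Icc] at hj
    have hj1 : (1 : ℝ) ≤ j := by exact_mod_cast hj.1
    have hjk : (j : ℝ) ≤ k := by exact_mod_cast hj.2
    have hkn : (k : ℝ) ≤ n := by exact_mod_cast hk
    have hm0 : 0 ≤ min (j : ℝ) (k - j + 1) := le_min (by linarith) (by linarith)
    have hm1 : min (j : ℝ) (k - j + 1) / n ≤ 1 :=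
      (div_le_one hn).2 ((min_le_left _ _).trans (hjk.trans hkn))
    gcongr
    simpa [neg_div, div_div, mul_comm] using half_le_one_sub_exp_neg (div_nonneg hm0 hn.le) hm1
  calc k * p / (8 * n) = p / (2 * n * k) * (k ^ 2 / 4) := by field_simp; ring
    _ ≤ p / (2 * n * k) * ∑ j ∈ Icc 1 k, min (j : ℝ) (k - j + 1) := by
      gcongr
      exact sq_div_four_le_sum_Icc_min k
    _ = ∑ j ∈ Icc 1 k, p / k * (min (j : ℝ) (k - j + 1) / (2 * n)) := by
      rw [mul_sum]
      refine sum_congr rfl fun j _ => ?_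
      ring
    _ ≤ _ := sum_le_sum hterm

theorem setIntegral_preimage_finset {Ω α E : Type*} [MeasurableSpace Ω] [MeasurableSpace α]
    [MeasurableSingletonClass α] [NormedAddCommGroup E] [NormedSpace ℝ E] [CompleteSpace E]
    {μ : Measure Ω} [IsFiniteMeasure μ] {X : Ω → α} (hX : Measurable X) (s : Finset α)
    (f : α → E) :
    ∫ ω in X ⁻¹' s, f (X ω) ∂μ = ∑ a ∈ s, μ.real (X ⁻¹' {a}) • f a := by
  have hfib : ∀ a, MeasurableSet (X ⁻¹' {a}) := fun a => hX (measurableSet_singleton a)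
  rw [← Set.biUnion_preimage_singleton, set_biUnion_coe,
    integral_biUnion_finset s (fun a _ => hfib a)
      ((Set.pairwiseDisjoint_fiber X _).subset (Set.subset_univ _))
      fun a _ => (integrableOn_const (C := f a)).congr_fun
        (fun ω hω => congrArg f hω.symm) (hfib a)]
  refine sum_congr rfl fun a _ => ?_
  rw [setIntegral_congr_fun (hfib a) (fun ω hω => congrArg f hω), setIntegral_const]

section

variable {Ω : Type*} [MeasurableSpace Ω] {μ : Measure Ω} [IsFiniteMeasure μ]

theorem sum_Iic_mul_div_le_integral_one_sub_exp {ξhat U : Ω → ℕ} (hξhat : Measurable ξhat)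
    (hU : Measurable U) (hU_le : ∀ ω, U ω ≤ ξhat ω)
    (hUunif : ∀ k j : ℕ, 1 ≤ j → j ≤ k →
      μ.real {ω | ξhat ω = k ∧ U ω = j} = μ.real {ω | ξhat ω = k} / k) (n : ℕ) :
    ∑ k ∈ Iic n, k * μ.real {ω | ξhat ω = k} / (8 * n) ≤
      ∫ ω, 1 - exp (-(min (U ω) (ξhat ω - U ω + 1) : ℝ) / n) ∂μ := by
  set X : Ω → ℕ × ℕ := fun ω => (ξhat ω, U ω)
  set φ : ℕ × ℕ → ℝ := fun p => 1 - exp (-min (p.2 : ℝ) (p.1 - p.2 + 1) / n)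
  set T : Finset (ℕ × ℕ) := (Iic n ×ˢ Icc 1 n).filter fun p => p.2 ≤ p.1
  have hX : Measurable X := hξhat.prodMk hU
  have hφX_nonneg : ∀ ω, 0 ≤ φ (X ω) := fun ω => by
    have hUω : (U ω : ℝ) ≤ ξhat ω := by exact_mod_cast hU_le ω
    simp only [φ, X, sub_nonneg, exp_le_one_iff]
    exact div_nonpos_of_nonpos_of_nonneg (neg_nonpos.2 (le_min (by positivity) (by linarith)))
      n.cast_nonneg
  have hφX_integrable : Integrable (fun ω => φ (X ω)) μ := by
    refine .of_bound ((measurable_of_countable φ).comp hX).aestronglyMeasurable 1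
      (ae_of_all _ fun ω => ?_)
    rw [Real.norm_of_nonneg (hφX_nonneg ω)]
    exact sub_le_self _ (exp_pos _).le
  have hfiber (k j : ℕ) : X ⁻¹' {(k, j)} = {ω | ξhat ω = k ∧ U ω = j} := by ext; simp [X]
  calc ∑ k ∈ Iic n, k * μ.real {ω | ξhat ω = k} / (8 * n)
    _ ≤ ∑ k ∈ Iic n, ∑ j ∈ Icc 1 k, μ.real (X ⁻¹' {(k, j)}) • φ (k, j) := by
      refine sum_le_sum fun k hk => (mul_div_le_sum_Icc_one_sub_exp (mem_Iic.1 hk)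
        measureReal_nonneg).trans_eq (sum_congr rfl fun j hj => ?_)
      rw [hfiber, hUunif k j (mem_Icc.1 hj).1 (mem_Icc.1 hj).2, smul_eq_mul]
    _ = ∑ p ∈ T, μ.real (X ⁻¹' {p}) • φ p := by
      refine (sum_finset_product T (Iic n) (Icc 1) (f := fun p => μ.real (X ⁻¹' {p}) • φ p)
        fun p => ?_).symm
      simp only [T, mem_filter, mem_product, mem_Iic, mem_Icc]
      omega
    _ = ∫ ω in X ⁻¹' T, φ (X ω) ∂μ := (setIntegral_preimage_finset hX T φ).symm
    _ ≤ ∫ ω, φ (X ω) ∂μ :=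
      setIntegral_le_integral hφX_integrable (ae_of_all _ hφX_nonneg)

theorem sum_Iic_mul_measureReal_eq_setIntegral_sq {ξ ξhat : Ω → ℕ} (hξ : Measurable ξ)
    (hbias : ∀ i : ℕ, μ.real {ω | ξhat ω = i} = i * μ.real {ω | ξ ω = i}) (n : ℕ) :
    ∑ k ∈ Iic n, k * μ.real {ω | ξhat ω = k} =
      ∫ ω in {ω | ξ ω ≤ n}, (ξ ω : ℝ) ^ 2 ∂μ := by
  rw [show {ω | ξ ω ≤ n} = ξ ⁻¹' ↑(Iic n) by ext; simp,
    setIntegral_preimage_finset hξ (Iic n) (fun k => (k : ℝ) ^ 2)]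
  refine sum_congr rfl fun k _ => ?_
  change (k : ℝ) * μ.real {ω | ξhat ω = k} = μ.real {ω | ξ ω = k} • (k : ℝ) ^ 2
  rw [hbias, smul_eq_mul]
  ring

end

theorem stmt13_general {Ω : Type*} [MeasureSpace Ω] [IsProbabilityMeasure (ℙ : Measure Ω)]
    (α : ℝ)
    (L₁ : ℝ → ℝ)
    (ξ ξhat U : Ω → ℕ) (hmeasξ : Measurable ξ) (hmeasξhat : Measurable ξhat)
    (hmeasU : Measurable U)
    (htrunc : ∀ n : ℕ, 1 ≤ n →
      ∫ ω in {ω | ξ ω ≤ n}, ((ξ ω : ℝ)) ^ 2 = (n : ℝ) ^ ((2 : ℝ) - α) * L₁ n)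
    (hbias : ∀ i : ℕ, (ℙ {ω | ξhat ω = i}).toReal = i * (ℙ {ω | ξ ω = i}).toReal)
    (hUrange : ∀ ω, 1 ≤ U ω ∧ U ω ≤ ξhat ω)
    (hUunif : ∀ k j : ℕ, 1 ≤ j → j ≤ k →
      (ℙ {ω | ξhat ω = k ∧ U ω = j}).toReal = (ℙ {ω | ξhat ω = k}).toReal / k) :
    ∀ n : ℕ, 1 ≤ n →
      (∫ ω, (1 - Real.exp (-(min (U ω) (ξhat ω - U ω + 1) : ℝ) / n))
          ≥ (1 / (8 * (n : ℝ))) * ∫ ω in {ω | ξ ω ≤ n}, ((ξ ω : ℝ)) ^ 2) ∧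
      (∫ ω, (1 - Real.exp (-(min (U ω) (ξhat ω - U ω + 1) : ℝ) / n))
          ≥ (1 / 8) * (n : ℝ) ^ ((1 : ℝ) - α) * L₁ n) := by
  intro n hn
  have key : 1 / (8 * n) * ∫ ω in {ω | ξ ω ≤ n}, (ξ ω : ℝ) ^ 2 ≤
      ∫ ω, 1 - exp (-(min (U ω) (ξhat ω - U ω + 1) : ℝ) / n) := calc
    _ = ∑ k ∈ Iic n, k * volume.real {ω | ξhat ω = k} / (8 * n) := by
      rw [← sum_Iic_mul_measureReal_eq_setIntegral_sq hmeasξ hbias, ← sum_div]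
      ring
    _ ≤ _ := sum_Iic_mul_div_le_integral_one_sub_exp hmeasξhat hmeasU (fun ω => (hUrange ω).2)
      hUunif n
  refine ⟨key, ?_⟩
  have hn0 : (0 : ℝ) < n := by exact_mod_cast hn
  rw [htrunc n hn, show (2 : ℝ) - α = 1 + (1 - α) by ring, rpow_add hn0, rpow_one] at key
  convert key using 1
  field_simp

/-- With `ξ` critical, `E(ξ² 1_{ξ≤n}) = n^(2-α) L₁(n)`, `ξ̂` size-biased, `U` uniform on
`{1,...,ξ̂}` given `ξ̂`, and `Y = min{U, ξ̂ - U + 1}`, one has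
`E(1 - e^{-Y/n}) ≥ (1/(8n)) E(ξ² 1_{ξ≤n}) = (1/8) n^(1-α) L₁(n)`. -/
theorem stmt13 {Ω : Type*} [MeasureSpace Ω] [IsProbabilityMeasure (ℙ : Measure Ω)]
    (α : ℝ) (hα1 : 1 < α) (hα2 : α ≤ 2)
    (L₁ : ℝ → ℝ) (hLpos : ∀ x > 0, 0 < L₁ x) (hL : SlowlyVarying L₁)
    (ξ ξhat U : Ω → ℕ) (hmeasξ : Measurable ξ) (hmeasξhat : Measurable ξhat)
    (hmeasU : Measurable U)
    (hmean : ∫ ω, (ξ ω : ℝ) = 1)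
    (htrunc : ∀ n : ℕ, 1 ≤ n →
      ∫ ω in {ω | ξ ω ≤ n}, ((ξ ω : ℝ)) ^ 2 = (n : ℝ) ^ ((2 : ℝ) - α) * L₁ n)
    (hbias : ∀ i : ℕ, (ℙ {ω | ξhat ω = i}).toReal = i * (ℙ {ω | ξ ω = i}).toReal)
    (hUrange : ∀ ω, 1 ≤ U ω ∧ U ω ≤ ξhat ω)
    (hUunif : ∀ k j : ℕ, 1 ≤ j → j ≤ k →
      (ℙ {ω | ξhat ω = k ∧ U ω = j}).toReal = (ℙ {ω | ξhat ω = k}).toReal / k) :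
    ∀ n : ℕ, 1 ≤ n →
      (∫ ω, (1 - Real.exp (-(min (U ω) (ξhat ω - U ω + 1) : ℝ) / n))
          ≥ (1 / (8 * (n : ℝ))) * ∫ ω in {ω | ξ ω ≤ n}, ((ξ ω : ℝ)) ^ 2) ∧
      (∫ ω, (1 - Real.exp (-(min (U ω) (ξhat ω - U ω + 1) : ℝ) / n))
          ≥ (1 / 8) * (n : ℝ) ^ ((1 : ℝ) - α) * L₁ n) :=
  stmt13_general α L₁ ξ ξhat U hmeasξ hmeasξhat hmeasU htrunc hbias hUrange hUunif
end

section
/- Let ε_1, ε_2, ... be i.i.d. Bernoulli(p) random variables and let K be a random variable (on the same space) such that {Y_1 + ... + Y_k ≥ n} ⊆ {K ≤ k} for all k, where Y_i ≥ 1 and ε_i = 1_{Y_i > 1}. If R ≥ n − K, then for all 0 ≤ r ≤ ⌊n/2⌋, P(R ≥ r) ≥ P(Bin(⌊n/2⌋, p) ≥ r). -/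
open MeasureTheory ProbabilityTheory Filter Real

open Finset

/-! If at least `r` of the first `⌊n/2⌋ ≤ n - r` steps satisfy `Y i > 1`, each of them contributes
at least `2` to `Y_0 + ⋯ + Y_{n-r-1}`, so this sum reaches `n`; hence `K ≤ n - r` and `R ≥ r`.
The number of such steps among the first `⌊n/2⌋` is binomial: split the event according to the
set of indices where `Y i > 1` and use independence on each piece. -/

lemma measurableSet_setOf_mem_iff {β : Type*} [MeasurableSpace β] {S : Set β}
    (hS : MeasurableSet S) (P : Prop) : MeasurableSet {x | x ∈ S ↔ P} := by
  by_cases hP : P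
  · simpa [hP] using hS
  · convert hS.compl using 1
    ext x
    simp [hP]

section CountingSuccesses

variable {Ω ι β : Type*} {Y : ι → Ω → β} {S : Set β} [DecidablePred (· ∈ S)] {s A : Finset ι}

lemma setOf_filter_eq_biInter (hA : A ⊆ s) :
    {ω | {i ∈ s | Y i ω ∈ S} = A} = ⋂ i ∈ s, Y i ⁻¹' {x | x ∈ S ↔ i ∈ A} := by
  ext ω
  simp only [Set.mem_ofPred_eq, Set.mem_iInter, Set.mem_preimage, Finset.ext_iff, mem_filter]
  refine ⟨fun h i hi => by simp [← h i, hi], fun h i => ?_⟩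
  by_cases hi : i ∈ s
  · simp [hi, h i hi]
  · exact ⟨fun h' => absurd h'.1 hi, fun hiA => absurd (hA hiA) hi⟩

lemma setOf_card_filter_eq_biUnion (s : Finset ι) (k : ℕ) :
    {ω | #{i ∈ s | Y i ω ∈ S} = k} = ⋃ A ∈ powersetCard k s, {ω | {i ∈ s | Y i ω ∈ S} = A} := by
  ext ω
  simp [mem_powersetCard, filter_subset]

variable [MeasurableSpace Ω] [MeasurableSpace β] {μ : Measure Ω}

lemma measurableSet_setOf_filter_eq (hY : ∀ i, Measurable (Y i)) (hS : MeasurableSet S)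
    (hA : A ⊆ s) : MeasurableSet {ω | {i ∈ s | Y i ω ∈ S} = A} := by
  rw [setOf_filter_eq_biInter hA]
  exact .biInter s.countable_toSet fun i _ => hY i (measurableSet_setOf_mem_iff hS _)

lemma measurableSet_setOf_card_filter_eq (hY : ∀ i, Measurable (Y i)) (hS : MeasurableSet S)
    (s : Finset ι) (k : ℕ) : MeasurableSet {ω | #{i ∈ s | Y i ω ∈ S} = k} := by
  rw [setOf_card_filter_eq_biUnion]
  exact .biUnion (powersetCard k s).countable_toSet fun A hA =>
    measurableSet_setOf_filter_eq hY hS (mem_powersetCard.mp hA).1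

variable [IsProbabilityMeasure μ] {q : ℝ}

lemma measureReal_setOf_filter_eq (hind : iIndepFun Y μ) (hY : ∀ i, Measurable (Y i))
    (hS : MeasurableSet S) (hq : ∀ i, μ.real (Y i ⁻¹' S) = q) (hA : A ⊆ s) :
    μ.real {ω | {i ∈ s | Y i ω ∈ S} = A} = q ^ #A * (1 - q) ^ (#s - #A) := by
  classical
  have hfactor (i : ι) :
      μ.real (Y i ⁻¹' {x | x ∈ S ↔ i ∈ A}) = if i ∈ A then q else 1 - q := by
    split_ifs with hi
    · simpa [hi] using hq i
    · rw [← hq i, ← probReal_compl_eq_one_sub (hY i hS)]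
      simp only [hi, iff_false]
      rfl
  rw [setOf_filter_eq_biInter hA, measureReal_def,
    hind.measure_inter_preimage_eq_mul s fun i _ => measurableSet_setOf_mem_iff hS _,
    ENNReal.toReal_prod]
  simp only [← measureReal_def, hfactor, prod_ite, prod_const, filter_mem_eq_inter,
    inter_eq_right.mpr hA, ← sdiff_eq_filter, card_sdiff_of_subset hA]

lemma measureReal_card_filter_eq (hind : iIndepFun Y μ) (hY : ∀ i, Measurable (Y i))
    (hS : MeasurableSet S) (hq : ∀ i, μ.real (Y i ⁻¹' S) = q) (s : Finset ι) (k : ℕ) :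
    μ.real {ω | #{i ∈ s | Y i ω ∈ S} = k} = (#s).choose k * q ^ k * (1 - q) ^ (#s - k) := by
  have hcylinder : ∀ A ∈ powersetCard k s,
      μ.real {ω | {i ∈ s | Y i ω ∈ S} = A} = q ^ k * (1 - q) ^ (#s - k) := by
    intro A hA
    obtain ⟨hAs, rfl⟩ := mem_powersetCard.mp hA
    exact measureReal_setOf_filter_eq hind hY hS hq hAs
  rw [setOf_card_filter_eq_biUnion, measureReal_biUnion_finset
    (fun A _ A' _ hne => Set.disjoint_left.mpr fun ω hA hA' => hne (hA.symm.trans hA'))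
    (fun A hA => measurableSet_setOf_filter_eq hY hS (mem_powersetCard.mp hA).1),
    sum_congr rfl hcylinder, sum_const, card_powersetCard, nsmul_eq_mul, mul_assoc]

lemma measureReal_setOf_le_card_filter (hind : iIndepFun Y μ) (hY : ∀ i, Measurable (Y i))
    (hS : MeasurableSet S) (hq : ∀ i, μ.real (Y i ⁻¹' S) = q) (s : Finset ι) (r : ℕ) :
    μ.real {ω | r ≤ #{i ∈ s | Y i ω ∈ S}} =
      ∑ k ∈ Icc r #s, (#s).choose k * q ^ k * (1 - q) ^ (#s - k) := by
  have hset : {ω | r ≤ #{i ∈ s | Y i ω ∈ S}} =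
      (fun ω => #{i ∈ s | Y i ω ∈ S}) ⁻¹' ↑(Icc r #s) := by
    ext ω
    simp [card_filter_le]
  rw [hset, ← sum_measureReal_preimage_singleton _
    fun k _ => measurableSet_setOf_card_filter_eq hY hS s k]
  exact sum_congr rfl fun k _ => measureReal_card_filter_eq hind hY hS hq s k

end CountingSuccesses

lemma card_add_card_filter_one_lt_le_sum {ι : Type*} (s : Finset ι) {y : ι → ℕ}
    (hy : ∀ i ∈ s, 1 ≤ y i) : #s + #{i ∈ s | 1 < y i} ≤ ∑ i ∈ s, y i := by
  rw [card_eq_sum_ones, card_filter, ← sum_add_distrib]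
  exact sum_le_sum fun i hi => by have := hy i hi; split_ifs <;> omega

theorem stmt18_general {Ω : Type*} [MeasureSpace Ω] [IsProbabilityMeasure (ℙ : Measure Ω)]
    (Y : ℕ → Ω → ℕ) (hmeas : ∀ i, Measurable (Y i))
    (hindep : iIndepFun Y ℙ)
    (hident : ∀ i, Measure.map (Y i) ℙ = Measure.map (Y 0) ℙ)
    (hY1 : ∀ i ω, 1 ≤ Y i ω)
    (n : ℕ) (K R : Ω → ℕ)
    (hK : ∀ k : ℕ, ∀ ω, n ≤ ∑ i ∈ Finset.range k, Y i ω → K ω ≤ k)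
    (hR : ∀ ω, n - K ω ≤ R ω)
    (p : ℝ) (hp : p = (ℙ {ω | 1 < Y 0 ω}).toReal) :
    ∀ r : ℕ, r ≤ n / 2 →
      (ℙ {ω | r ≤ R ω}).toReal ≥
        ∑ k ∈ Finset.Icc r (n / 2),
          ((n / 2).choose k : ℝ) * p ^ k * (1 - p) ^ (n / 2 - k) := by
  intro r hr
  let S : Set ℕ := {x | 1 < x}
  have hq (i : ℕ) : (ℙ : Measure Ω).real (Y i ⁻¹' S) = p := by
    rw [hp, measureReal_def, ← Measure.map_apply (hmeas i) .of_discrete, hident i,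
      Measure.map_apply (hmeas 0) .of_discrete]
    rfl
  have hevent : {ω | r ≤ #{i ∈ range (n / 2) | Y i ω ∈ S}} ⊆ {ω | r ≤ R ω} := by
    intro ω (hω : r ≤ #{i ∈ range (n / 2) | 1 < Y i ω})
    have hsum : n ≤ ∑ i ∈ range (n - r), Y i ω := calc
      n = (n - r) + r := by omega
      _ ≤ #(range (n - r)) + #{i ∈ range (n - r) | 1 < Y i ω} := by
        rw [card_range]
        gcongr
        exact hω.trans (card_le_card (filter_subset_filter _ (range_subset_range.mpr (by omega))))
      _ ≤ ∑ i ∈ range (n - r), Y i ω :=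
        card_add_card_filter_one_lt_le_sum _ fun i _ => hY1 i ω
    have hKle := hK _ ω hsum
    have hRge := hR ω
    show r ≤ R ω
    omega
  have htail := measureReal_setOf_le_card_filter hindep hmeas .of_discrete hq (range (n / 2)) r
  rw [card_range] at htail
  rw [ge_iff_le, ← measureReal_def, ← htail]
  exact measureReal_mono hevent

/-- Let `Y_i ≥ 1` be i.i.d., `p = P(Y_1 > 1)`, `K` satisfy `{Y_1+...+Y_k ≥ n} ⊆ {K ≤ k}`,
and `R ≥ n - K`.  Then for all `0 ≤ r ≤ ⌊n/2⌋`,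
`P(R ≥ r) ≥ P(Bin(⌊n/2⌋, p) ≥ r)`. -/
theorem stmt18 {Ω : Type*} [MeasureSpace Ω] [IsProbabilityMeasure (ℙ : Measure Ω)]
    (Y : ℕ → Ω → ℕ) (hmeas : ∀ i, Measurable (Y i))
    (hindep : iIndepFun Y ℙ)
    (hident : ∀ i, Measure.map (Y i) ℙ = Measure.map (Y 0) ℙ)
    (hY1 : ∀ i ω, 1 ≤ Y i ω)
    (n : ℕ) (K R : Ω → ℕ) (hKmeas : Measurable K) (hRmeas : Measurable R)
    (hK : ∀ k : ℕ, ∀ ω, n ≤ ∑ i ∈ Finset.range k, Y i ω → K ω ≤ k)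
    (hR : ∀ ω, n - K ω ≤ R ω)
    (p : ℝ) (hp : p = (ℙ {ω | 1 < Y 0 ω}).toReal) :
    ∀ r : ℕ, r ≤ n / 2 →
      (ℙ {ω | r ≤ R ω}).toReal ≥
        ∑ k ∈ Finset.Icc r (n / 2),
          ((n / 2).choose k : ℝ) * p ^ k * (1 - p) ^ (n / 2 - k) :=
  stmt18_general Y hmeas hindep hident hY1 n K R hK hR p hp
end

section
/- Let D_n be a positive-integer-valued random variable and suppose there exist a > 0, ε > 0 with α − 1 − ε > 0 such that P(D_n ≤ i) ≤ a((i/n)^{α−1−ε} ∧ 1) + 1_{⌊n/2⌋ ≤ i} for all i ≥ 1. Then for any 0 < q < α − 1 − ε there is a constant c' > 0, independent of n, such that E(D_n^{−q}) ≤ c' n^{−q}. -/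
/-!
Summation by parts bounds `E(D^{-q})` by `∑_{i ≤ n} P(D ≤ i) (i^{-q} - (i+1)^{-q}) + (n+1)^{-q}`.
Write `β = α - 1 - ε`. By concavity of `x ↦ x^q` the weights are at most `q i^{-q-1}`, so the
part `a (i/n)^β` of the bound on `P(D ≤ i)` contributes `a q n^{-β} ∑_{i ≤ n} i^{β-q-1}`, which by
concavity of `x ↦ x^{β-q}` is at most `a q/(β-q) n^{-q}`. The part `1_{⌊n/2⌋ ≤ i}` telescopes,
together with `(n+1)^{-q}`, to `max(1, ⌊n/2⌋)^{-q} ≤ 3^q n^{-q}`.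
-/

open MeasureTheory ProbabilityTheory Filter Real

open Finset

lemma rpow_add_one_sub_rpow_le {p x : ℝ} (hp₀ : 0 ≤ p) (hp₁ : p ≤ 1) (hx : 0 < x) :
    (x + 1) ^ p - x ^ p ≤ p * x ^ (p - 1) := by
  have h := (concaveOn_rpow hp₀ hp₁).slope_le_of_hasDerivAt (Set.mem_Ici.2 hx.le)
    (Set.mem_Ici.2 (by linarith : 0 ≤ x + 1)) (lt_add_one x)
    (hasDerivAt_rpow_const (Or.inl hx.ne'))
  simpa [slope_def_field] using h

lemma le_rpow_add_one_sub_rpow {p x : ℝ} (hp₀ : 0 ≤ p) (hp₁ : p ≤ 1) (hx : 0 ≤ x) :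
    p * (x + 1) ^ (p - 1) ≤ (x + 1) ^ p - x ^ p := by
  have h := (concaveOn_rpow hp₀ hp₁).le_slope_of_hasDerivAt (Set.mem_Ici.2 hx)
    (Set.mem_Ici.2 (by linarith : 0 ≤ x + 1)) (lt_add_one x)
    (hasDerivAt_rpow_const (Or.inl (by linarith : x + 1 ≠ 0)))
  simpa [slope_def_field] using h

lemma rpow_neg_sub_rpow_neg_add_one_le {q x : ℝ} (hq₀ : 0 ≤ q) (hq₁ : q ≤ 1) (hx : 0 < x) :
    x ^ (-q) - (x + 1) ^ (-q) ≤ q * x ^ (-q - 1) := by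
  have hx₁ : 0 < x + 1 := by linarith
  calc x ^ (-q) - (x + 1) ^ (-q)
      = ((x + 1) ^ q - x ^ q) * (x ^ (-q) * (x + 1) ^ (-q)) := by
        rw [rpow_neg hx.le, rpow_neg hx₁.le]
        field_simp [(rpow_pos_of_pos hx q).ne', (rpow_pos_of_pos hx₁ q).ne']
    _ ≤ q * x ^ (q - 1) * (x ^ (-q) * x ^ (-q)) := by
        gcongr ?_ * (_ * ?_)
        · exact rpow_add_one_sub_rpow_le hq₀ hq₁ hx
        · exact rpow_le_rpow_of_nonpos hx (by linarith) (by linarith)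
    _ = q * x ^ (-q - 1) := by
        rw [mul_assoc, ← rpow_add hx, ← rpow_add hx]
        ring_nf

lemma sum_Icc_rpow_sub_one_le {p : ℝ} (hp₀ : 0 < p) (hp₁ : p ≤ 1) (N : ℕ) :
    ∑ i ∈ Icc 1 N, (i : ℝ) ^ (p - 1) ≤ (N : ℝ) ^ p / p := by
  rw [le_div_iff₀ hp₀]
  induction N with
  | zero => simp [zero_rpow hp₀.ne']
  | succ N ih =>
    rw [sum_Icc_succ_top (Nat.le_add_left 1 N), add_mul]
    have h := le_rpow_add_one_sub_rpow hp₀.le hp₁ (Nat.cast_nonneg N)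
    push_cast
    linarith

lemma sum_Icc_ite_sub_succ {f : ℕ → ℝ} {d N : ℕ} (hd : 1 ≤ d) (hdN : d ≤ N + 1) :
    ∑ i ∈ Icc 1 N, (if d ≤ i then f i - f (i + 1) else 0) = f d - f (N + 1) := by
  have hfilter : (Icc 1 N).filter (d ≤ ·) = Ico d (N + 1) := by
    ext i
    simp only [mem_filter, mem_Icc, mem_Ico]
    omega
  rw [← sum_filter, hfilter, ← neg_sub, ← sum_Ico_sub (f := f) hdN, ← sum_neg_distrib]
  simp

lemma le_sum_Icc_ite_sub_succ {f : ℕ → ℝ} (hf : AntitoneOn f (Set.Ici 1)) {d : ℕ} (hd : 1 ≤ d)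
    (N : ℕ) : f d ≤ ∑ i ∈ Icc 1 N, (if d ≤ i then f i - f (i + 1) else 0) + f (N + 1) := by
  rcases le_or_gt d (N + 1) with hdN | hdN
  · rw [sum_Icc_ite_sub_succ hd hdN]
    simp
  · rw [sum_eq_zero fun i hi => if_neg (by simp only [mem_Icc] at hi; omega), zero_add]
    exact hf (Set.mem_Ici.2 (Nat.le_add_left 1 N)) (Set.mem_Ici.2 hd) hdN.le

theorem integral_comp_le_sum_measure_le_mul_sub {Ω : Type*} [MeasurableSpace Ω] (μ : Measure Ω)
    [IsProbabilityMeasure μ] {X : Ω → ℕ} (hX : Measurable X) (hX₁ : ∀ ω, 1 ≤ X ω) {f : ℕ → ℝ}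
    (hf : AntitoneOn f (Set.Ici 1)) (hf₀ : ∀ i, 0 ≤ f i) (N : ℕ) :
    ∫ ω, f (X ω) ∂μ ≤
      ∑ i ∈ Icc 1 N, (μ {ω | X ω ≤ i}).toReal * (f i - f (i + 1)) + f (N + 1) := by
  have hS : ∀ i : ℕ, MeasurableSet {ω | X ω ≤ i} := fun i => hX measurableSet_Iic
  have hint : ∀ i, Integrable ({ω | X ω ≤ i}.indicator fun _ => f i - f (i + 1)) μ :=
    fun i => (integrable_const _).indicator (hS i)
  calc ∫ ω, f (X ω) ∂μ
      ≤ ∫ ω, (∑ i ∈ Icc 1 N, {ω | X ω ≤ i}.indicator (fun _ => f i - f (i + 1)) ω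
          + f (N + 1)) ∂μ := by
        refine integral_mono_of_nonneg (ae_of_all _ fun ω => hf₀ _)
          ((integrable_finsetSum _ fun i _ => hint i).add (integrable_const _))
          (ae_of_all _ fun ω => ?_)
        simpa only [Set.indicator_apply, Set.mem_ofPred_eq] using
          le_sum_Icc_ite_sub_succ hf (hX₁ ω) N
    _ = ∑ i ∈ Icc 1 N, (μ {ω | X ω ≤ i}).toReal * (f i - f (i + 1)) + f (N + 1) := by
        rw [integral_add (integrable_finsetSum _ fun i _ => hint i) (integrable_const _),
          integral_finsetSum _ fun i _ => hint i, integral_const]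
        simp [integral_indicator_const _ (hS _), measureReal_def]

lemma sum_Icc_div_rpow_mul_sub_le {β q : ℝ} (hq₀ : 0 ≤ q) (hq₁ : q ≤ 1) (hqβ : q < β)
    (hβ : β ≤ q + 1) {n : ℕ} (hn : 1 ≤ n) :
    ∑ i ∈ Icc 1 n, ((i : ℝ) / n) ^ β * ((i : ℝ) ^ (-q) - ((i : ℝ) + 1) ^ (-q)) ≤
      q / (β - q) * (n : ℝ) ^ (-q) := by
  have hn₀ : (0 : ℝ) < n := by exact_mod_cast hn
  have hterm : ∀ i ∈ Icc 1 n, ((i : ℝ) / n) ^ β * ((i : ℝ) ^ (-q) - ((i : ℝ) + 1) ^ (-q)) ≤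
      q * (n : ℝ) ^ (-β) * (i : ℝ) ^ (β - q - 1) := by
    intro i hi
    have hi₀ : (0 : ℝ) < i := by exact_mod_cast (mem_Icc.1 hi).1
    calc ((i : ℝ) / n) ^ β * ((i : ℝ) ^ (-q) - ((i : ℝ) + 1) ^ (-q))
        ≤ ((i : ℝ) / n) ^ β * (q * (i : ℝ) ^ (-q - 1)) := by
          gcongr
          exact rpow_neg_sub_rpow_neg_add_one_le hq₀ hq₁ hi₀
      _ = q * (n : ℝ) ^ (-β) * (i : ℝ) ^ (β - q - 1) := by
          rw [div_rpow hi₀.le hn₀.le, rpow_neg hn₀.le, show β - q - 1 = β + (-q - 1) by ring,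
            rpow_add hi₀]
          ring
  calc _ ≤ ∑ i ∈ Icc 1 n, q * (n : ℝ) ^ (-β) * (i : ℝ) ^ (β - q - 1) := sum_le_sum hterm
    _ = q * (n : ℝ) ^ (-β) * ∑ i ∈ Icc 1 n, (i : ℝ) ^ ((β - q) - 1) := by
        rw [mul_sum]
    _ ≤ q * (n : ℝ) ^ (-β) * ((n : ℝ) ^ (β - q) / (β - q)) := by
        gcongr
        exact sum_Icc_rpow_sub_one_le (by linarith) (by linarith) n
    _ = q / (β - q) * (n : ℝ) ^ (-q) := by
        rw [mul_div_assoc', mul_assoc, ← rpow_add hn₀]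
        ring_nf

lemma sum_Icc_ite_half_mul_sub_add_le {q : ℝ} (hq : 0 ≤ q) {n : ℕ} (hn : 1 ≤ n) :
    ∑ i ∈ Icc 1 n, (if n / 2 ≤ i then (1 : ℝ) else 0) * ((i : ℝ) ^ (-q) - ((i : ℝ) + 1) ^ (-q))
      + ((n : ℝ) + 1) ^ (-q) ≤ 3 ^ q * (n : ℝ) ^ (-q) := by
  set m := max 1 (n / 2)
  have hsum := sum_Icc_ite_sub_succ (f := fun i : ℕ => (i : ℝ) ^ (-q)) (le_max_left 1 (n / 2))
    (show m ≤ n + 1 by omega)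
  have hm : (n : ℝ) / 3 ≤ m := by
    rw [div_le_iff₀ (by norm_num)]
    exact_mod_cast (show n ≤ m * 3 by omega)
  have hite : ∀ i ∈ Icc 1 n, (if n / 2 ≤ i then (1 : ℝ) else 0) *
      ((i : ℝ) ^ (-q) - ((i : ℝ) + 1) ^ (-q)) =
      if m ≤ i then (i : ℝ) ^ (-q) - ((i + 1 : ℕ) : ℝ) ^ (-q) else 0 := by
    intro i hi
    have hiff : n / 2 ≤ i ↔ m ≤ i := by simp only [mem_Icc] at hi; omega
    rw [ite_mul, one_mul, zero_mul, Nat.cast_add_one]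
    exact if_congr hiff rfl rfl
  calc _ = (m : ℝ) ^ (-q) := by
        rw [sum_congr rfl hite, hsum, Nat.cast_add_one]
        ring
    _ ≤ ((n : ℝ) / 3) ^ (-q) := rpow_le_rpow_of_nonpos (by positivity) hm (by linarith)
    _ = 3 ^ q * (n : ℝ) ^ (-q) := by
        rw [div_rpow (Nat.cast_nonneg n) (by norm_num), rpow_neg (by norm_num : (0 : ℝ) ≤ 3),
          div_inv_eq_mul, mul_comm]

lemma sum_Icc_mul_rpow_neg_sub_add_le {a β q : ℝ} (ha : 0 ≤ a) (hq₀ : 0 ≤ q) (hq₁ : q ≤ 1)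
    (hqβ : q < β) (hβ : β ≤ q + 1) {n : ℕ} (hn : 1 ≤ n) :
    ∑ i ∈ Icc 1 n, (a * ((i : ℝ) / n) ^ β + (if n / 2 ≤ i then (1 : ℝ) else 0))
        * ((i : ℝ) ^ (-q) - ((i : ℝ) + 1) ^ (-q)) + ((n : ℝ) + 1) ^ (-q) ≤
      (a * (q / (β - q)) + 3 ^ q) * (n : ℝ) ^ (-q) := by
  calc _ = a * ∑ i ∈ Icc 1 n, ((i : ℝ) / n) ^ β * ((i : ℝ) ^ (-q) - ((i : ℝ) + 1) ^ (-q))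
          + (∑ i ∈ Icc 1 n, (if n / 2 ≤ i then (1 : ℝ) else 0)
            * ((i : ℝ) ^ (-q) - ((i : ℝ) + 1) ^ (-q)) + ((n : ℝ) + 1) ^ (-q)) := by
        simp only [add_mul, sum_add_distrib, mul_sum, mul_assoc, add_assoc]
    _ ≤ a * (q / (β - q) * (n : ℝ) ^ (-q)) + 3 ^ q * (n : ℝ) ^ (-q) := by
        gcongr
        · exact sum_Icc_div_rpow_mul_sub_le hq₀ hq₁ hqβ hβ hn
        · exact sum_Icc_ite_half_mul_sub_add_le hq₀ hn
    _ = (a * (q / (β - q)) + 3 ^ q) * (n : ℝ) ^ (-q) := by ring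

theorem stmt19_general {Ω : Type*} [MeasureSpace Ω] [IsProbabilityMeasure (ℙ : Measure Ω)]
    (α a ε q : ℝ) (hα2 : α ≤ 2) (ha : 0 < a) (hε : 0 < ε)
    (hq : 0 < q) (hq' : q < α - 1 - ε)
    (D : ℕ → Ω → ℕ) (hmeas : ∀ n, Measurable (D n))
    (hpos : ∀ n ω, 1 ≤ D n ω)
    (hbound : ∀ n : ℕ, 1 ≤ n → ∀ i : ℕ, 1 ≤ i →
      (ℙ {ω | D n ω ≤ i}).toReal ≤
        a * min (((i : ℝ) / n) ^ (α - 1 - ε)) 1 + (if n / 2 ≤ i then (1 : ℝ) else 0)) :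
    ∃ c' : ℝ, 0 < c' ∧ ∀ n : ℕ, 1 ≤ n →
      ∫ ω, ((D n ω : ℝ)) ^ (-q) ≤ c' * (n : ℝ) ^ (-q) := by
  set β := α - 1 - ε
  have hqβ : 0 < β - q := by linarith
  refine ⟨a * (q / (β - q)) + 3 ^ q, add_pos (mul_pos ha (div_pos hq hqβ)) (by positivity),
    fun n hn => ?_⟩
  have hf : AntitoneOn (fun i : ℕ => (i : ℝ) ^ (-q)) (Set.Ici 1) := fun i hi j _ hij =>
    rpow_le_rpow_of_nonpos (by exact_mod_cast hi) (by exact_mod_cast hij) (by linarith)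
  have hlayer := integral_comp_le_sum_measure_le_mul_sub ℙ (hmeas n) (hpos n) hf
    (fun i => rpow_nonneg (Nat.cast_nonneg i) _) n
  simp only [Nat.cast_add_one] at hlayer
  refine hlayer.trans ((add_le_add_left (sum_le_sum fun i hi => ?_) _).trans
    (sum_Icc_mul_rpow_neg_sub_add_le ha.le hq.le (by linarith) (by linarith) (by linarith) hn))
  have hi₀ : (0 : ℝ) < i := Nat.cast_pos.2 (mem_Icc.1 hi).1
  refine mul_le_mul_of_nonneg_right ((hbound n hn i (mem_Icc.1 hi).1).trans ?_)
    (sub_nonneg.2 (rpow_le_rpow_of_nonpos hi₀ (by linarith) (by linarith)))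
  gcongr
  exact min_le_left _ _

/-- If `D_n ≥ 1` is integer valued and `P(D_n ≤ i) ≤ a((i/n)^(α-1-ε) ∧ 1) + 1_{⌊n/2⌋ ≤ i}`,
then for `0 < q < α-1-ε` one has `E(D_n^{-q}) ≤ c' n^{-q}` with `c'` independent of `n`. -/
theorem stmt19 {Ω : Type*} [MeasureSpace Ω] [IsProbabilityMeasure (ℙ : Measure Ω)]
    (α a ε q : ℝ) (hα1 : 1 < α) (hα2 : α ≤ 2) (ha : 0 < a) (hε : 0 < ε)
    (hαε : 0 < α - 1 - ε) (hq : 0 < q) (hq' : q < α - 1 - ε)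
    (D : ℕ → Ω → ℕ) (hmeas : ∀ n, Measurable (D n))
    (hpos : ∀ n ω, 1 ≤ D n ω)
    (hbound : ∀ n : ℕ, 1 ≤ n → ∀ i : ℕ, 1 ≤ i →
      (ℙ {ω | D n ω ≤ i}).toReal ≤
        a * min (((i : ℝ) / n) ^ (α - 1 - ε)) 1 + (if n / 2 ≤ i then (1 : ℝ) else 0)) :
    ∃ c' : ℝ, 0 < c' ∧ ∀ n : ℕ, 1 ≤ n →
      ∫ ω, ((D n ω : ℝ)) ^ (-q) ≤ c' * (n : ℝ) ^ (-q) :=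
  stmt19_general α a ε q hα2 ha hε hq hq' D hmeas hpos hbound
end
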